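/- arXiv:2511.05710 — 8 statements merged into one kernel-verified Lean document; each statement's English description precedes it below -/
import Mathlib

section
/- Fix an integer m ≥ 2, a real c > 0 with c ≠ m^{-1/2}, nonnegative reals σ_1, …, σ_{m+1} that are not all zero, and a real δ. For each n ∈ ℕ let (X_{n,1}, …, X_{n,m+1}) be an ℝ^{m+1}-valued random vector and δ_n a real number, and suppose δ_n → δ and the law of (X_{n,1}, …, X_{n,m+1}) converges weakly (in distribution) to the product measure N(0,σ_1²) ⊗ ⋯ ⊗ N(0,σ_{m+1}²) as n → ∞. Then P[(X_{n,m+1} + δ_n − X̄_n)² > c² Ŝ_n²] → P[(ψ_{m+1} + δ − ψ̄_m)² > c² S_m²] as n → ∞, where X̄_n and Ŝ_n² are the sample mean and sample variance of X_{n,1}, …, X_{n,m}, ψ_1, …, ψ_{m+1} are independent with ψ_j ~ N(0,σ_j²), and ψ̄_m, S_m² are the sample mean and sample variance of ψ_1, …, ψ_m. (This is the paper's Theorem 1: with X_{n,j} = √n(θ̂_j − μ_0) for j ≤ m, X_{n,m+1} = √n(θ̂_{m+1} − μ_1) and δ_n = √n(μ_1 − μ_0), the left side equals P[|T̂_m|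 > c] and the right side equals P[|T_m| > c].) -/
/-!
Pair the law of `X_n` with the Dirac mass at `δ_n`: these products converge weakly to the
product of the limit law with the Dirac mass at `δ`, and the rejection event is
`{(x, d) | 0 < g(x, d)}` for a continuous `g`. By the portmanteau theorem it therefore suffices
that the limit law gives no mass to `{x | g(x, δ) = 0}`. Along a coordinate `j` with `σ_j ≠ 0`,
`g` is a quadratic polynomial whose leading coefficient is `1` (for `j = m + 1`) or
`(1 - m c²) / m²` (for `j ≤ m`), nonzero because `c ≠ m^{-1/2}`. So every slice of the zero set
in that direction is finite, hence null for `N(0, σ_j²)`, and Fubini concludes.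
-/

open MeasureTheory ProbabilityTheory Filter

/-- Sample mean of `y_1, …, y_m`. -/
noncomputable def sMean {m : ℕ} (y : Fin m → ℝ) : ℝ := (∑ j, y j) / (m : ℝ)

/-- Sample variance of `y_1, …, y_m`. -/
noncomputable def sVar {m : ℕ} (y : Fin m → ℝ) : ℝ :=
  (∑ j, (y j - sMean y) ^ 2) / ((m : ℝ) - 1)

/-- The product Gaussian measure `N(0,σ_1²) ⊗ ⋯ ⊗ N(0,σ_{m+1}²)` on `ℝ^{m+1}`. -/
noncomputable def limitLaw (m : ℕ) (σ : Fin (m + 1) → ℝ) :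
    Measure (Fin (m + 1) → ℝ) :=
  Measure.pi (fun j => gaussianReal 0 ⟨σ j ^ 2, sq_nonneg _⟩)

open Topology Function

theorem MeasureTheory.Measure.pi_null_of_null_slices {ι : Type*} [Fintype ι] [DecidableEq ι]
    {X : ι → Type*} [∀ i, MeasurableSpace (X i)] {μ : ∀ i, Measure (X i)}
    [∀ i, SigmaFinite (μ i)] (i : ι) {S : Set (∀ i, X i)} (hS : MeasurableSet S)
    (h : ∀ x, μ i {t | update x i t ∈ S} = 0) :
    Measure.pi μ S = 0 := by
  have hslices : ∫⋯∫⁻_{i}, S.indicator 1 ∂μ = ∫⋯∫⁻_{i}, 0 ∂μ := by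
    ext x
    simp only [lmarginal_singleton, Pi.zero_apply, lintegral_zero]
    rw [← h x]
    exact lintegral_indicator_one (measurable_update x hS)
  calc Measure.pi μ S = ∫⁻ x, S.indicator 1 x ∂Measure.pi μ := (lintegral_indicator_one hS).symm
    _ = 0 := by
      rw [lintegral_eq_of_lmarginal_eq {i} (measurable_one.indicator hS) measurable_zero hslices]
      simp

theorem Set.finite_setOf_quadratic_eq_zero {K : Type*} [Field K] {a b c : K} (ha : a ≠ 0) :
    {t : K | a * t ^ 2 + b * t + c = 0}.Finite := by
  open Polynomial in
  have hp : C a * X ^ 2 + C b * X + C c ≠ 0 := fun h => ha (by simpa using congrArg (coeff · 2) h)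
  refine (finite_setOfPred_isRoot hp).subset fun t ht => ?_
  simpa using ht

theorem tendsto_measure_setOf_pos_of_tendsto {ι Ω Θ : Type*} {L : Filter ι}
    [TopologicalSpace Ω] [MeasurableSpace Ω] [BorelSpace Ω] [SecondCountableTopology Ω]
    [TopologicalSpace.PseudoMetrizableSpace Ω]
    [TopologicalSpace Θ] [MeasurableSpace Θ] [BorelSpace Θ] [SecondCountableTopology Θ]
    [TopologicalSpace.PseudoMetrizableSpace Θ]
    {μs : ι → ProbabilityMeasure Ω} {μ : ProbabilityMeasure Ω} (hμ : Tendsto μs L (𝓝 μ))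
    {θs : ι → Θ} {θ : Θ} (hθ : Tendsto θs L (𝓝 θ))
    {g : Ω → Θ → ℝ} (hg : Continuous (uncurry g)) (hnull : (μ : Measure Ω) {x | g x θ = 0} = 0) :
    Tendsto (fun i => (μs i : Measure Ω) {x | 0 < g x (θs i)}) L
      (𝓝 ((μ : Measure Ω) {x | 0 < g x θ})) := by
  have prod_dirac_apply : ∀ (ν : ProbabilityMeasure Ω) (t : Θ) {S : Set (Ω × Θ)},
      MeasurableSet S → (ν.prod (diracProba t) : Measure (Ω × Θ)) S =
        (ν : Measure Ω) {x | (x, t) ∈ S} := fun ν t S hS => by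
    rw [ProbabilityMeasure.toMeasure_prod, diracProba, ProbabilityMeasure.coe_mk,
      Measure.prod_dirac, Measure.map_apply measurable_prodMk_right hS]
    rfl
  have hE : IsOpen (uncurry g ⁻¹' Set.Ioi 0) := isOpen_Ioi.preimage hg
  have hfrontier : frontier (uncurry g ⁻¹' Set.Ioi 0) ⊆ uncurry g ⁻¹' {0} := by
    simpa using hg.frontier_preimage_subset (Set.Ioi (0 : ℝ))
  have hlim : Tendsto (fun i => (μs i).prod (diracProba (θs i))) L
      (𝓝 (μ.prod (diracProba θ))) :=
    (ProbabilityMeasure.continuous_prod.tendsto (μ, diracProba θ)).comp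
      (hμ.prodMk_nhds ((continuous_diracProba.tendsto θ).comp hθ))
  have hfrontier_null :
      (μ.prod (diracProba θ) : Measure (Ω × Θ)) (frontier (uncurry g ⁻¹' Set.Ioi 0)) = 0 :=
    measure_mono_null hfrontier <| by
      rw [prod_dirac_apply _ _ (hg.measurable (measurableSet_singleton 0))]
      exact hnull
  have hE_lim := ProbabilityMeasure.tendsto_measure_of_null_frontier_of_tendsto' hlim hfrontier_null
  simp only [prod_dirac_apply _ _ hE.measurableSet] at hE_lim
  exact hE_lim

theorem Finset.sum_univ_update {ι M : Type*} [Fintype ι] [DecidableEq ι] [AddCommGroup M]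
    (w : ι → M) (k : ι) (t : M) : ∑ j, update w k t j = ∑ j, w j + (t - w k) := by
  rw [Finset.sum_update_of_mem (Finset.mem_univ k), Finset.sdiff_singleton_eq_erase,
    ← Finset.add_sum_erase _ _ (Finset.mem_univ k)]
  abel

section SampleStatistics

variable {m : ℕ}

theorem sum_sq_sub_sMean (hm : (m : ℝ) ≠ 0) (y : Fin m → ℝ) :
    ∑ j, (y j - sMean y) ^ 2 = ∑ j, y j ^ 2 - (∑ j, y j) ^ 2 / m := by
  simp only [sub_sq, Finset.sum_add_distrib, Finset.sum_sub_distrib, ← Finset.sum_mul,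
    ← Finset.mul_sum, Finset.sum_const, Finset.card_univ, Fintype.card_fin, nsmul_eq_mul, sMean]
  field_simp
  ring

theorem sMean_update (w : Fin m → ℝ) (k : Fin m) (t : ℝ) :
    sMean (update w k t) = sMean w + (t - w k) / m := by
  rw [sMean, sMean, Finset.sum_univ_update, add_div]

theorem sVar_update (hm : 2 ≤ m) (w : Fin m → ℝ) (k : Fin m) (t : ℝ) :
    sVar (update w k t) =
      sVar w + 2 * (t - w k) * (w k - sMean w) / (m - 1) + (t - w k) ^ 2 / m := by
  have hm0 : (m : ℝ) ≠ 0 := Nat.cast_ne_zero.2 (by omega)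
  have hm1 : (m : ℝ) - 1 ≠ 0 := sub_ne_zero.2 (Nat.cast_ne_one.2 (by omega))
  have hsq : ∑ j, update w k t j ^ 2 = ∑ j, w j ^ 2 + (t ^ 2 - w k ^ 2) := by
    rw [← Finset.sum_univ_update]
    exact Finset.sum_congr rfl fun j _ => apply_update (fun _ (y : ℝ) => y ^ 2) w k t j
  rw [sVar, sVar, sum_sq_sub_sMean hm0, sum_sq_sub_sMean hm0, hsq, Finset.sum_univ_update, sMean]
  field_simp
  ring

end SampleStatistics

section RejectionGap

variable {m : ℕ}

noncomputable def rejectionGap (c : ℝ) (x : Fin (m + 1) → ℝ) (d : ℝ) : ℝ :=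
  (x (Fin.last m) + d - sMean (fun j : Fin m => x j.castSucc)) ^ 2 -
    c ^ 2 * sVar (fun j : Fin m => x j.castSucc)

theorem continuous_rejectionGap (c : ℝ) :
    Continuous (uncurry (rejectionGap (m := m) c)) := by
  unfold rejectionGap sVar sMean
  fun_prop

theorem exists_rejectionGap_update_eq_quadratic (hm : 2 ≤ m) {c : ℝ} (hcm : (m : ℝ) * c ^ 2 ≠ 1)
    (x : Fin (m + 1) → ℝ) (d : ℝ) (i : Fin (m + 1)) :
    ∃ a b e : ℝ, a ≠ 0 ∧ ∀ t, rejectionGap c (update x i t) d = a * t ^ 2 + b * t + e := by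
  set w : Fin m → ℝ := fun j => x j.castSucc
  cases i using Fin.lastCases with
  | last =>
    have hw : ∀ t, (fun j : Fin m => update x (Fin.last m) t j.castSucc) = w := fun t =>
      update_comp_eq_of_forall_ne x t fun j => (Fin.castSucc_lt_last j).ne
    refine ⟨1, 2 * (d - sMean w), (d - sMean w) ^ 2 - c ^ 2 * sVar w, one_ne_zero, fun t => ?_⟩
    rw [rejectionGap, hw, update_self]
    ring
  | cast k =>
    have hw : ∀ t, (fun j : Fin m => update x k.castSucc t j.castSucc) = update w k t := fun t =>
      update_comp_eq_of_injective x (Fin.castSucc_injective m) k t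
    have hlast : ∀ t, update x k.castSucc t (Fin.last m) = x (Fin.last m) := fun t =>
      update_of_ne (Fin.castSucc_lt_last k).ne' t x
    have hm0 : (m : ℝ) ≠ 0 := Nat.cast_ne_zero.2 (by omega)
    have hm1 : (m : ℝ) - 1 ≠ 0 := sub_ne_zero.2 (Nat.cast_ne_one.2 (by omega))
    -- the gap is a quadratic in `s = t - w k` with leading coefficient `(1 - m c²) / m²`
    set a : ℝ := (1 - m * c ^ 2) / m ^ 2
    set A := x (Fin.last m) + d - sMean w
    set b : ℝ := -2 * A / m - 2 * c ^ 2 * (w k - sMean w) / (m - 1)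
    set e : ℝ := A ^ 2 - c ^ 2 * sVar w
    refine ⟨a, b - 2 * a * w k, a * w k ^ 2 - b * w k + e,
      div_ne_zero (sub_ne_zero.2 (Ne.symm hcm)) (pow_ne_zero 2 hm0), fun t => ?_⟩
    rw [rejectionGap, hlast, hw, sMean_update, sVar_update hm]
    simp only [a, b, e, A]
    field_simp
    ring

end RejectionGap

-- Instance search does not see through the anonymous constructor `⟨σ ^ 2, _⟩` used in `limitLaw`.
instance isProbabilityMeasure_gaussianReal_sq (σ : ℝ) :
    IsProbabilityMeasure (gaussianReal 0 ⟨σ ^ 2, sq_nonneg σ⟩) :=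
  instIsProbabilityMeasureGaussianReal 0 _

instance isProbabilityMeasure_limitLaw (m : ℕ) (σ : Fin (m + 1) → ℝ) :
    IsProbabilityMeasure (limitLaw m σ) := by
  unfold limitLaw
  infer_instance

theorem limitLaw_rejectionGap_eq_zero {m : ℕ} (hm : 2 ≤ m) {c : ℝ} (hcm : (m : ℝ) * c ^ 2 ≠ 1)
    {σ : Fin (m + 1) → ℝ} (hσ : ∃ j, σ j ≠ 0) (d : ℝ) :
    limitLaw m σ {x | rejectionGap c x d = 0} = 0 := by
  obtain ⟨j, hj⟩ := hσ
  have hmeas : MeasurableSet {x : Fin (m + 1) → ℝ | rejectionGap c x d = 0} :=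
    ((continuous_rejectionGap c).comp (Continuous.prodMk_left d)).measurable
      (measurableSet_singleton 0)
  refine Measure.pi_null_of_null_slices j hmeas fun x => ?_
  obtain ⟨a, b, e, ha, hquad⟩ := exists_rejectionGap_update_eq_quadratic hm hcm x d j
  have hvar : (⟨σ j ^ 2, sq_nonneg _⟩ : NNReal) ≠ 0 := fun h =>
    hj (pow_eq_zero_iff two_ne_zero |>.1 (congrArg NNReal.toReal h))
  refine gaussianReal_absolutelyContinuous 0 hvar ?_
  simp only [Set.mem_ofPred_eq, hquad]
  exact (Set.finite_setOf_quadratic_eq_zero ha).measure_zero _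

theorem stmt0_general (m : ℕ) (hm : 2 ≤ m) (c : ℝ) (hc : 0 < c)
    (hc' : c ≠ (Real.sqrt m)⁻¹)
    (σ : Fin (m + 1) → ℝ) (hσne : ∃ j, σ j ≠ 0)
    (δ : ℝ) (δseq : ℕ → ℝ) (hδ : Tendsto δseq atTop (nhds δ))
    (ν : ℕ → Measure (Fin (m + 1) → ℝ))
    (hνprob : ∀ n, IsProbabilityMeasure (ν n))
    (hweak : ∀ f : BoundedContinuousFunction (Fin (m + 1) → ℝ) ℝ,
      Tendsto (fun n => ∫ x, f x ∂(ν n)) atTop (nhds (∫ x, f x ∂(limitLaw m σ)))) :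
    Tendsto
      (fun n => ((ν n) {x | (x (Fin.last m) + δseq n - sMean (fun j : Fin m => x j.castSucc)) ^ 2 >
          c ^ 2 * sVar (fun j : Fin m => x j.castSucc)}).toReal)
      atTop
      (nhds (((limitLaw m σ) {x | (x (Fin.last m) + δ - sMean (fun j : Fin m => x j.castSucc)) ^ 2 >
          c ^ 2 * sVar (fun j : Fin m => x j.castSucc)}).toReal)) := by
  have hcm : (m : ℝ) * c ^ 2 ≠ 1 := fun h => hc' <| by
    rw [← Real.sqrt_sq hc.le, eq_inv_of_mul_eq_one_right h, Real.sqrt_inv]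
  have hν : Tendsto (β := ProbabilityMeasure (Fin (m + 1) → ℝ)) (fun n => ⟨ν n, hνprob n⟩) atTop
      (𝓝 ⟨limitLaw m σ, inferInstance⟩) :=
    ProbabilityMeasure.tendsto_iff_forall_integral_tendsto.2 hweak
  have hlim := tendsto_measure_setOf_pos_of_tendsto hν hδ (continuous_rejectionGap c)
    (limitLaw_rejectionGap_eq_zero hm hcm hσne δ)
  simp only [rejectionGap, sub_pos] at hlim
  exact (ENNReal.tendsto_toReal (measure_ne_top _ _)).comp hlim

/-- Theorem 1 of the paper: convergence of the rejection probability of the `t`-test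
to its value under the limiting normal law. -/
theorem stmt0 (m : ℕ) (hm : 2 ≤ m) (c : ℝ) (hc : 0 < c)
    (hc' : c ≠ (Real.sqrt m)⁻¹)
    (σ : Fin (m + 1) → ℝ) (hσ : ∀ j, 0 ≤ σ j) (hσne : ∃ j, σ j ≠ 0)
    (δ : ℝ) (δseq : ℕ → ℝ) (hδ : Tendsto δseq atTop (nhds δ))
    (ν : ℕ → Measure (Fin (m + 1) → ℝ))
    (hνprob : ∀ n, IsProbabilityMeasure (ν n))
    (hweak : ∀ f : BoundedContinuousFunction (Fin (m + 1) → ℝ) ℝ,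
      Tendsto (fun n => ∫ x, f x ∂(ν n)) atTop (nhds (∫ x, f x ∂(limitLaw m σ)))) :
    Tendsto
      (fun n => ((ν n) {x | (x (Fin.last m) + δseq n - sMean (fun j : Fin m => x j.castSucc)) ^ 2 >
          c ^ 2 * sVar (fun j : Fin m => x j.castSucc)}).toReal)
      atTop
      (nhds (((limitLaw m σ) {x | (x (Fin.last m) + δ - sMean (fun j : Fin m => x j.castSucc)) ^ 2 >
          c ^ 2 * sVar (fun j : Fin m => x j.castSucc)}).toReal)) :=
  stmt0_general m hm c hc hc' σ hσne δ δseq hδ ν hνprob hweak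
end

section
/- Let m ≥ 2, k ∈ {1, …, m}, ρ ≥ 0, and c > 0 with c ≠ m^{-1/2}. Then the supremum of the null rejection probability over the relative-heterogeneity set is attained: there exists σ* ∈ S_m(k,ρ) such that p_c(σ*) = sup_{σ ∈ S_m(k,ρ)} p_c(σ). -/
open MeasureTheory ProbabilityTheory Filter

/-- The null rejection probability `p_c(σ)` of the `t`-test, where
`ξ_1, …, ξ_{m+1}` are i.i.d. standard normal. -/
noncomputable def rejProb (m : ℕ) (c : ℝ) (σ : Fin (m + 1) → ℝ) : ℝ :=
  ((Measure.pi (fun _ : Fin (m + 1) => gaussianReal 0 1))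
    {ξ | (σ (Fin.last m) * ξ (Fin.last m) -
        (m : ℝ)⁻¹ * ∑ i : Fin m, σ i.castSucc * ξ i.castSucc) ^ 2 >
      c ^ 2 * ((m : ℝ) - 1)⁻¹ *
        ∑ j : Fin m, (σ j.castSucc * ξ j.castSucc -
          (m : ℝ)⁻¹ * ∑ i : Fin m, σ i.castSucc * ξ i.castSucc) ^ 2}).toReal

/-- The `i`-th smallest value (0-indexed) among `y_1, …, y_m`. -/
noncomputable def sortedVal (m : ℕ) (y : Fin m → ℝ) (i : Fin m) : ℝ := y (Tuple.sort y i)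

/-- The relative-heterogeneity set `S_m(k, ρ)`; here `kk : Fin m` encodes the rank
`k = kk + 1 ∈ {1, …, m}`. -/
noncomputable def hetSet (m : ℕ) (kk : Fin m) (ρ : ℝ) : Set (Fin (m + 1) → ℝ) :=
  {σ | (∀ j, 0 ≤ σ j) ∧
    σ (Fin.last m) ≤ ρ * sortedVal m (fun j : Fin m => σ j.castSucc) kk}

/-!
The rejection event is `{ξ | 0 < Q (σ * ξ)}` for one fixed quadratic form `Q = rejForm m c`, so
`p_c` is invariant under positive scalings of `σ`, and `S_m(k, ρ)` is a closed cone (a finite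
union of polyhedral cones). Hence it suffices to maximize `p_c` over the compact set of unit
vectors of `S_m(k, ρ)`, where it is continuous by dominated convergence: for `σ ≠ 0` the boundary
`{ξ | Q (σ * ξ) = 0}` is Gaussian-null, since along a coordinate `i` with `σ i ≠ 0` each line
meets it in the roots of a quadratic with leading coefficient `σ i ^ 2 * Q (single i 1)`, and
`Q (single i 1)` is `1` or `(1 - m c²) / m²`, nonzero because `c ≠ m^{-1/2}`.
-/

theorem QuadraticMap.finite_setOf_map_add_smul_eq_zero {R M : Type*} [CommRing R] [IsDomain R]
    [AddCommGroup M] [Module R M] (Q : QuadraticMap R M R) (x : M) {v : M} (hv : Q v ≠ 0) :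
    {t : R | Q (x + t • v) = 0}.Finite := by
  open Polynomial in
  have hp : C (Q v) * X ^ 2 + C (QuadraticMap.polar Q x v) * X + C (Q x) ≠ 0 := fun h =>
    hv (by simpa using congrArg (coeff · 2) h)
  refine (finite_setOfPred_isRoot hp).subset fun t ht => ?_
  simp only [Set.mem_ofPred_eq, QuadraticMap.map_add Q x, QuadraticMap.map_smul,
    QuadraticMap.polar_smul_right, smul_eq_mul] at ht
  simp only [Set.mem_ofPred_eq, IsRoot, eval_add, eval_mul, eval_C, eval_X, eval_pow]
  linear_combination ht

theorem Function.update_eq_update_zero_add_smul_single {ι R : Type*} [DecidableEq ι] [Semiring R]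
    (x : ι → R) (i : ι) (t : R) :
    Function.update x i t = Function.update x i 0 + t • Pi.single i 1 := by
  ext j
  rcases eq_or_ne j i with rfl | h <;> simp [*]

theorem MeasureTheory.Measure.pi_eq_zero_of_forall_update {n : ℕ} {α : Fin (n + 1) → Type*}
    [∀ i, MeasurableSpace (α i)] (μ : ∀ i, Measure (α i)) [∀ i, SigmaFinite (μ i)]
    (j : Fin (n + 1)) {s : Set (∀ i, α i)} (hs : MeasurableSet s)
    (h : ∀ x, μ j {t | Function.update x j t ∈ s} = 0) : Measure.pi μ s = 0 := by
  set e := MeasurableEquiv.piFinSuccAbove α j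
  have hse : s = e ⁻¹' (e.symm ⁻¹' s) := by simp [Set.preimage_preimage]
  rw [hse, (measurePreserving_piFinSuccAbove μ j).measure_preimage_equiv,
    Measure.prod_apply_symm (e.symm.measurable hs)]
  refine lintegral_eq_zero_of_ae_eq_zero (Eventually.of_forall fun y => ?_)
  cases isEmpty_or_nonempty (α j)
  · simp [Set.eq_empty_of_isEmpty]
  · simpa [e, MeasurableEquiv.piFinSuccAbove, Fin.insertNthEquiv, Set.preimage] using
      h (j.insertNth (Classical.arbitrary _) y)

theorem MeasureTheory.continuousAt_measureReal_setOf_pos {X Ω : Type*} [TopologicalSpace X]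
    [FirstCountableTopology X] [MeasurableSpace Ω] {μ : Measure Ω} [IsFiniteMeasure μ]
    {F : X → Ω → ℝ} (hF : ∀ ω, Continuous (F · ω)) (hmeas : ∀ x, Measurable (F x)) {x₀ : X}
    (h₀ : μ {ω | F x₀ ω = 0} = 0) :
    ContinuousAt (fun x => μ.real {ω | 0 < F x ω}) x₀ := by
  refine (ENNReal.tendsto_toReal (measure_ne_top μ _)).comp
    (tendsto_measure_of_ae_tendsto_indicator_of_isFiniteMeasure _
      (measurableSet_lt measurable_const (hmeas x₀))
      (fun x => measurableSet_lt measurable_const (hmeas x)) ?_)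
  filter_upwards [measure_eq_zero_iff_ae_notMem.mp h₀] with ω hω
  rcases Ne.lt_or_gt hω with hneg | hpos
  · filter_upwards [(hF ω).continuousAt.eventually (gt_mem_nhds hneg)] with x hx
    exact iff_of_false hx.not_gt hneg.not_gt
  · filter_upwards [(hF ω).continuousAt.eventually (lt_mem_nhds hpos)] with x hx
    exact iff_of_true hx hpos

theorem Tuple.le_comp_sort_iff {α β : Type*} [LinearOrder α] [LinearOrder β] {m : ℕ}
    (y : Fin m → α) (k : Fin m) {g : α → β} (hg : Monotone g) (b : β) :
    b ≤ g (y (Tuple.sort y k)) ↔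
      ∃ A : Finset (Fin m), A.card = m - k ∧ ∀ i ∈ A, b ≤ g (y i) := by
  constructor
  · refine fun hb => ⟨(Finset.Ici k).image (Tuple.sort y), ?_, ?_⟩
    · rw [Finset.card_image_of_injective _ (Equiv.injective _), Fin.card_Ici]
    · simp only [Finset.mem_image, Finset.mem_Ici, forall_exists_index, and_imp]
      rintro _ j hkj rfl
      exact hb.trans (hg (Tuple.monotone_sort y hkj))
  · rintro ⟨A, hA, hAb⟩
    by_contra! hlt
    have hdisj : Disjoint A ((Finset.Iic k).image (Tuple.sort y)) := by
      simp only [Finset.disjoint_left, Finset.mem_image, Finset.mem_Iic, not_exists, not_and]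
      rintro _ hi j hjk rfl
      exact (hAb _ hi).not_gt ((hg (Tuple.monotone_sort y hjk)).trans_lt hlt)
    have hcard := (Finset.card_union_of_disjoint hdisj).symm.trans_le (Finset.card_le_univ _)
    rw [hA, Finset.card_image_of_injective _ (Equiv.injective _), Fin.card_Iic,
      Fintype.card_fin] at hcard
    omega

theorem IsClosed.exists_isMaxOn_of_smul_invariant {E : Type*} [NormedAddCommGroup E]
    [NormedSpace ℝ E] [ProperSpace E] {C : Set E} {f : E → ℝ} (hC : IsClosed C)
    (hCsmul : ∀ x ∈ C, ∀ r : ℝ, 0 < r → r • x ∈ C) (hne : ∃ x ∈ C, x ≠ 0)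
    (hf : ∀ x ≠ 0, ContinuousAt f x) (hfsmul : ∀ x, ∀ r : ℝ, 0 < r → f (r • x) = f x)
    (hf0 : ∀ x ∈ C, f 0 ≤ f x) : ∃ x ∈ C, IsMaxOn f C x := by
  have hnormalize : ∀ x ∈ C, x ≠ 0 →
      ‖x‖⁻¹ • x ∈ C ∩ Metric.sphere 0 1 ∧ f (‖x‖⁻¹ • x) = f x := fun x hx hx0 => by
    have hpos : 0 < ‖x‖⁻¹ := inv_pos.mpr (norm_pos_iff.mpr hx0)
    refine ⟨⟨hCsmul x hx _ hpos, ?_⟩, hfsmul x _ hpos⟩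
    rw [mem_sphere_zero_iff_norm, norm_smul, norm_inv, norm_norm,
      inv_mul_cancel₀ (norm_ne_zero_iff.mpr hx0)]
  obtain ⟨x₀, hx₀C, hx₀⟩ := hne
  obtain ⟨x, hxK, hmax⟩ := ((isCompact_sphere 0 1).inter_left hC).exists_isMaxOn
    ⟨_, (hnormalize x₀ hx₀C hx₀).1⟩ fun y hy =>
      (hf y (ne_zero_of_mem_unit_sphere ⟨y, hy.2⟩)).continuousWithinAt
  refine ⟨x, hxK.1, fun y hy => ?_⟩
  rcases eq_or_ne y 0 with rfl | hy0
  · exact hf0 x hxK.1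
  · rw [Set.mem_ofPred_eq, ← (hnormalize y hy hy0).2]
    exact hmax (hnormalize y hy hy0).1

noncomputable def rejForm (m : ℕ) (c : ℝ) : QuadraticMap ℝ (Fin (m + 1) → ℝ) ℝ :=
  let mean : (Fin (m + 1) → ℝ) →ₗ[ℝ] ℝ := (m : ℝ)⁻¹ • ∑ i : Fin m, LinearMap.proj i.castSucc
  QuadraticMap.sq.comp (LinearMap.proj (Fin.last m) - mean) -
    (c ^ 2 * ((m : ℝ) - 1)⁻¹) •
      ∑ j : Fin m, QuadraticMap.sq.comp (LinearMap.proj j.castSucc - mean)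

theorem rejForm_apply (m : ℕ) (c : ℝ) (x : Fin (m + 1) → ℝ) :
    rejForm m c x = (x (Fin.last m) - (m : ℝ)⁻¹ * ∑ i : Fin m, x i.castSucc) ^ 2 -
      c ^ 2 * ((m : ℝ) - 1)⁻¹ *
        ∑ j : Fin m, (x j.castSucc - (m : ℝ)⁻¹ * ∑ i : Fin m, x i.castSucc) ^ 2 := by
  simp [rejForm, QuadraticMap.sq, sq]

theorem continuous_rejForm (m : ℕ) (c : ℝ) : Continuous (rejForm m c) := by
  simp only [funext (rejForm_apply m c)]
  fun_prop

theorem rejProb_eq_measureReal (m : ℕ) (c : ℝ) (σ : Fin (m + 1) → ℝ) :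
    rejProb m c σ =
      (Measure.pi fun _ => gaussianReal 0 1).real {ξ | 0 < rejForm m c (σ * ξ)} := by
  simp [rejProb, measureReal_def, rejForm_apply, mul_assoc]

theorem rejForm_single_last (m : ℕ) (c : ℝ) : rejForm m c (Pi.single (Fin.last m) 1) = 1 := by
  simp [rejForm_apply, (Fin.castSucc_lt_last _).ne]

theorem rejForm_single_castSucc {m : ℕ} (hm : 2 ≤ m) (c : ℝ) (j : Fin m) :
    rejForm m c (Pi.single j.castSucc 1) = (1 - m * c ^ 2) / m ^ 2 := by
  have hm1 : (m : ℝ) - 1 ≠ 0 := by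
    have : (2 : ℝ) ≤ m := by exact_mod_cast hm
    linarith
  have hm0 : (m : ℝ) ≠ 0 := by positivity
  have hx : ∀ i : Fin m, (Pi.single j.castSucc 1 : Fin (m + 1) → ℝ) i.castSucc =
      if i = j then 1 else 0 := fun i => by simp [Pi.single_apply]
  have hsq : ∀ i : Fin m, ((if i = j then (1 : ℝ) else 0) - (m : ℝ)⁻¹ * 1) ^ 2 =
      (m : ℝ)⁻¹ ^ 2 + if i = j then 1 - 2 * (m : ℝ)⁻¹ else 0 := fun i => by
    split_ifs <;> ring
  rw [rejForm_apply, Pi.single_eq_of_ne (Fin.castSucc_lt_last j).ne']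
  simp only [hx, Finset.sum_ite_eq', Finset.mem_univ, if_true]
  simp only [hsq, Finset.sum_add_distrib, Finset.sum_ite_eq', Finset.mem_univ, if_true,
    Finset.sum_const, Finset.card_univ, Fintype.card_fin, nsmul_eq_mul]
  field_simp
  ring

theorem rejForm_single_ne_zero {m : ℕ} (hm : 2 ≤ m) {c : ℝ} (hmc : (m : ℝ) * c ^ 2 ≠ 1)
    (i : Fin (m + 1)) : rejForm m c (Pi.single i 1) ≠ 0 := by
  induction i using Fin.lastCases with
  | last => simp [rejForm_single_last]
  | cast j =>
    rw [rejForm_single_castSucc hm]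
    exact div_ne_zero (sub_ne_zero.mpr hmc.symm) (by positivity)

theorem measure_setOf_rejForm_mul_eq_zero {m : ℕ} (hm : 2 ≤ m) {c : ℝ}
    (hmc : (m : ℝ) * c ^ 2 ≠ 1) {σ : Fin (m + 1) → ℝ} (hσ : σ ≠ 0) :
    Measure.pi (fun _ => gaussianReal 0 1) {ξ | rejForm m c (σ * ξ) = 0} = 0 := by
  obtain ⟨i, hi⟩ := Function.ne_iff.mp hσ
  refine Measure.pi_eq_zero_of_forall_update _ i
    (measurableSet_eq_fun ((continuous_rejForm m c).comp (continuous_const_mul σ)).measurable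
      measurable_const) fun x => gaussianReal_absolutelyContinuous 0 one_ne_zero
      (Set.Finite.measure_zero ?_ volume)
  have hv : rejForm m c (σ * Pi.single i 1) ≠ 0 := by
    have hsingle : σ * Pi.single i 1 = σ i • Pi.single i 1 := by
      ext j
      rcases eq_or_ne j i with rfl | h <;> simp [*]
    rw [hsingle, QuadraticMap.map_smul, smul_eq_mul]
    exact mul_ne_zero (mul_self_ne_zero.mpr hi) (rejForm_single_ne_zero hm hmc i)
  have hline : ∀ t, σ * Function.update x i t =
      σ * Function.update x i 0 + t • (σ * Pi.single i 1) := fun t => by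
    rw [Function.update_eq_update_zero_add_smul_single x i t, mul_add, mul_smul_comm]
  refine ((rejForm m c).finite_setOf_map_add_smul_eq_zero (σ * Function.update x i 0) hv).subset
    fun t ht => ?_
  rwa [Set.mem_ofPred_eq, ← hline]

theorem rejProb_smul (m : ℕ) (c : ℝ) (σ : Fin (m + 1) → ℝ) {r : ℝ} (hr : r ≠ 0) :
    rejProb m c (r • σ) = rejProb m c σ := by
  simp only [rejProb_eq_measureReal, smul_mul_assoc, QuadraticMap.map_smul, smul_eq_mul,
    mul_pos_iff_of_pos_left (mul_self_pos.mpr hr)]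

theorem rejProb_zero (m : ℕ) (c : ℝ) : rejProb m c 0 = 0 := by
  simp [rejProb_eq_measureReal]

theorem continuousAt_rejProb {m : ℕ} (hm : 2 ≤ m) {c : ℝ} (hmc : (m : ℝ) * c ^ 2 ≠ 1)
    {σ : Fin (m + 1) → ℝ} (hσ : σ ≠ 0) : ContinuousAt (rejProb m c) σ := by
  simp only [funext (rejProb_eq_measureReal m c)]
  exact continuousAt_measureReal_setOf_pos
    (fun ξ => (continuous_rejForm m c).comp (continuous_mul_const ξ))
    (fun σ => ((continuous_rejForm m c).comp (continuous_const_mul σ)).measurable)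
    (measure_setOf_rejForm_mul_eq_zero hm hmc hσ)

theorem mem_hetSet_iff {m : ℕ} {kk : Fin m} {ρ : ℝ} (hρ : 0 ≤ ρ) {σ : Fin (m + 1) → ℝ} :
    σ ∈ hetSet m kk ρ ↔ (∀ j, 0 ≤ σ j) ∧
      ∃ A : Finset (Fin m), A.card = m - kk ∧ ∀ i ∈ A, σ (Fin.last m) ≤ ρ * σ i.castSucc :=
  and_congr_right fun _ =>
    Tuple.le_comp_sort_iff (fun j : Fin m => σ j.castSucc) kk (monotone_mul_left_of_nonneg hρ) _

theorem isClosed_hetSet {m : ℕ} (kk : Fin m) {ρ : ℝ} (hρ : 0 ≤ ρ) :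
    IsClosed (hetSet m kk ρ) := by
  have hset : hetSet m kk ρ = (⋂ j, {σ | 0 ≤ σ j}) ∩
      ⋃ (A : Finset (Fin m)) (_ : A.card = m - kk),
        ⋂ i ∈ A, {σ | σ (Fin.last m) ≤ ρ * σ i.castSucc} := by
    ext σ
    simp [mem_hetSet_iff hρ]
  rw [hset]
  exact (isClosed_iInter fun j => isClosed_le continuous_const (continuous_apply j)).inter
    (isClosed_iUnion_of_finite fun A => isClosed_iUnion_of_finite fun _ => isClosed_biInter
      fun i _ => isClosed_le (continuous_apply _) (continuous_const.mul (continuous_apply _)))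

theorem smul_mem_hetSet {m : ℕ} {kk : Fin m} {ρ : ℝ} (hρ : 0 ≤ ρ) {r : ℝ} (hr : 0 ≤ r)
    {σ : Fin (m + 1) → ℝ} (hσ : σ ∈ hetSet m kk ρ) : r • σ ∈ hetSet m kk ρ := by
  obtain ⟨hnonneg, A, hA, hle⟩ := (mem_hetSet_iff hρ).mp hσ
  refine (mem_hetSet_iff hρ).mpr ⟨fun j => mul_nonneg hr (hnonneg j), A, hA, fun i hi => ?_⟩
  simpa only [Pi.smul_apply, smul_eq_mul, mul_left_comm r ρ] using
    mul_le_mul_of_nonneg_left (hle i hi) hr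

theorem single_castSucc_mem_hetSet {m : ℕ} (kk : Fin m) {ρ : ℝ} (hρ : 0 ≤ ρ) :
    Pi.single kk.castSucc 1 ∈ hetSet m kk ρ := by
  have hnonneg : (0 : Fin (m + 1) → ℝ) ≤ Pi.single kk.castSucc 1 :=
    Pi.single_nonneg.mpr zero_le_one
  refine ⟨hnonneg, ?_⟩
  rw [Pi.single_eq_of_ne (Fin.castSucc_lt_last kk).ne']
  exact mul_nonneg hρ (hnonneg _)

/-- Lemma (attainment of the supremum of the rejection probability over `S_m(k,ρ)`). -/
theorem stmt3 (m : ℕ) (hm : 2 ≤ m) (k : ℕ) (hk2 : k ≤ m)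
    (ρ : ℝ) (hρ : 0 ≤ ρ) (c : ℝ) (hc : 0 < c) (hc' : c ≠ (Real.sqrt m)⁻¹) :
    ∃ σs ∈ hetSet m ⟨k - 1, by omega⟩ ρ,
      IsGreatest (rejProb m c '' hetSet m ⟨k - 1, by omega⟩ ρ) (rejProb m c σs) := by
  have hmc : (m : ℝ) * c ^ 2 ≠ 1 := fun h => hc' <| by
    rw [← Real.sqrt_inv, ← eq_inv_of_mul_eq_one_right h, Real.sqrt_sq hc.le]
  obtain ⟨σs, hσs, hmax⟩ := (isClosed_hetSet _ hρ).exists_isMaxOn_of_smul_invariant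
    (fun σ hσ r hr => smul_mem_hetSet hρ hr.le hσ)
    ⟨_, single_castSucc_mem_hetSet _ hρ, by simp⟩
    (fun σ hσ => continuousAt_rejProb hm hmc hσ) (fun σ r hr => rejProb_smul m c σ hr.ne')
    (fun σ _ => (rejProb_zero m c).trans_le ENNReal.toReal_nonneg)
  exact ⟨σs, hσs, Set.mem_image_of_mem _ hσs, Set.forall_mem_image.2 hmax⟩
end

section
/- Let m ≥ 4 be an integer and ρ > 0 a real. Then the function c ↦ H̄_m(c, ρ) is strictly decreasing on the interval (√(3(m−1)/(m(m−3))), ∞), and lim_{c→∞} H̄_m(c, ρ) < 0. -/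
open Filter

/-- The function `H̄_m(c, ρ)` from Theorem 4 of the paper (here written as `Hbar m ρ c`). -/
noncomputable def Hbar (m : ℕ) (ρ c : ℝ) : ℝ :=
  let κ : ℝ := (m : ℝ) * c ^ 2 / ((m : ℝ) - 1)
  let τ : ℝ := (κ + 1) / ((m : ℝ) * κ)
  let Z : ℝ := 1 / (2 * max ((m : ℝ) * ρ ^ 2 + 1) (κ + 2))
  max (3 * ((m : ℝ) * ρ ^ 2 + 1) / ((m : ℝ) * ρ ^ 2 + κ + 1)) ((2 * κ + 3) / (κ + 1)) +
    (1 - τ) / (1 - τ + min ((1 - 2 * τ) * κ * Z - 1 / 2) 0) -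
    (m : ℝ) * κ / ((m : ℝ) * ρ ^ 2 + κ + 1) - 1

/-! Substitute κ = m c² / (m − 1), which increases with c and exceeds 3/(m − 3) > 2/(m − 2) on the
given interval. Once (m − 2)κ > 2 we have τ < 1/2, the `min` is its first argument, and the middle
term is N / (N − s) with N = 1 − τ increasing and s = 1/2 − (1 − 2τ)κZ̲ positive and decreasing;
the first term is a max of two decreasing fractions and the subtracted one increases in κ. As
κ → ∞ the three terms tend to 2, (m − 1)/(m − 2) and m, so the limit is 1 + (m − 1)/(m − 2) − m,
which is negative for m > 3. -/

open Set Topology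

lemma div_sub_lt_div_sub {a₁ a₂ b₁ b₂ : ℝ} (hb₂ : 0 < b₂) (hb : b₂ < b₁) (hab : b₁ < a₁)
    (ha : a₁ < a₂) : a₂ / (a₂ - b₂) < a₁ / (a₁ - b₁) := by
  rw [div_lt_div_iff₀ (by linarith) (by linarith)]
  nlinarith [mul_lt_mul_of_pos_right ha hb₂,
    mul_lt_mul_of_pos_left hb (hb₂.trans (hb.trans (hab.trans ha)))]

lemma tendsto_affine_div_affine_atTop (a b c d : ℝ) (hc : c ≠ 0) :
    Tendsto (fun x : ℝ => (a * x + b) / (c * x + d)) atTop (𝓝 (a / c)) := by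
  have h0 := tendsto_inv_atTop_zero (𝕜 := ℝ)
  have h := ((tendsto_const_nhds (x := a)).add (h0.const_mul b)).div
    ((tendsto_const_nhds (x := c)).add (h0.const_mul d)) (by simpa using hc)
  rw [mul_zero, add_zero, mul_zero, add_zero] at h
  refine h.congr' ?_
  filter_upwards [eventually_gt_atTop 0] with x hx
  rw [Pi.div_apply]
  field_simp

namespace Hbar

noncomputable def tau (n κ : ℝ) : ℝ := (κ + 1) / (n * κ)

noncomputable def gap (n q κ : ℝ) : ℝ :=
  (1 - 2 * tau n κ) * κ * (1 / (2 * max (q + 1) (κ + 2)))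

noncomputable def ofKappa (n q κ : ℝ) : ℝ :=
  max (3 * (q + 1) / (q + κ + 1)) ((2 * κ + 3) / (κ + 1)) +
    (1 - tau n κ) / (1 - tau n κ + min (gap n q κ - 1 / 2) 0) - n * κ / (q + κ + 1) - 1

lemma eq_ofKappa_comp (m : ℕ) (ρ : ℝ) :
    Hbar m ρ = ofKappa m (m * ρ ^ 2) ∘ fun c => m * c ^ 2 / (m - 1) := rfl

variable {n q κ : ℝ}

lemma pos_of_two_div_lt (hn : 2 < n) (hκ : 2 / (n - 2) < κ) : 0 < κ :=
  (div_pos two_pos (sub_pos.2 hn)).trans hκ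

lemma two_lt_mul_of_two_div_lt (hn : 2 < n) (hκ : 2 / (n - 2) < κ) : 2 < (n - 2) * κ := by
  rw [div_lt_iff₀ (sub_pos.2 hn)] at hκ
  linarith

lemma tau_lt_half (hn : 2 < n) (hκ : 2 / (n - 2) < κ) : tau n κ < 1 / 2 := by
  have := pos_of_two_div_lt hn hκ
  have := two_lt_mul_of_two_div_lt hn hκ
  rw [tau, div_lt_iff₀ (by positivity)]
  linarith

lemma tau_strictAntiOn (hn : 0 < n) : StrictAntiOn (tau n) (Ioi 0) := by
  intro κ₁ hκ₁ κ₂ hκ₂ h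
  simp only [mem_Ioi] at hκ₁ hκ₂
  rw [tau, tau, div_lt_div_iff₀ (by positivity) (by positivity)]
  nlinarith

lemma tendsto_tau (hn : n ≠ 0) : Tendsto (tau n) atTop (𝓝 (1 / n)) :=
  (tendsto_affine_div_affine_atTop 1 1 n 0 hn).congr fun κ => by simp [tau]

lemma gap_pos (hn : 2 < n) (hκ : 2 / (n - 2) < κ) : 0 < gap n q κ := by
  have := pos_of_two_div_lt hn hκ
  have := tau_lt_half hn hκ
  have : 0 < max (q + 1) (κ + 2) := lt_max_of_lt_right (by linarith)
  unfold gap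
  have : 0 < 1 - 2 * tau n κ := by linarith
  positivity

lemma gap_lt_half (hn : 0 < n) (hκ : 0 < κ) : gap n q κ < 1 / 2 := by
  have hτ : 0 < tau n κ := by unfold tau; positivity
  have hM : κ + 2 ≤ max (q + 1) (κ + 2) := le_max_right _ _
  rw [gap, mul_one_div, div_lt_iff₀ (by linarith)]
  nlinarith

lemma gap_eq_div (hn : n ≠ 0) (hκ : κ ≠ 0) :
    gap n q κ = ((n - 2) * κ - 2) / (2 * n * max (q + 1) (κ + 2)) := by
  rw [gap, tau]
  field_simp
  ring

lemma gap_strictMonoOn (hn : 2 < n) : StrictMonoOn (gap n q) (Ioi (2 / (n - 2))) := by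
  intro κ₁ hκ₁ κ₂ _ h
  have hκ₁0 := pos_of_two_div_lt hn hκ₁
  have hnum := two_lt_mul_of_two_div_lt hn hκ₁
  have hκ₂0 := hκ₁0.trans h
  have hn0 : 0 < n := by linarith
  rw [gap_eq_div hn0.ne' hκ₁0.ne', gap_eq_div hn0.ne' hκ₂0.ne']
  rcases le_total (κ₂ + 2) (q + 1) with hM | hM
  · rw [max_eq_left hM, max_eq_left (by linarith)]
    have : 0 < q + 1 := by linarith
    gcongr
  · rw [max_eq_right hM]
    calc _ ≤ ((n - 2) * κ₁ - 2) / (2 * n * (κ₁ + 2)) := by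
          gcongr
          exact le_max_right _ _
      _ < _ := by
          rw [div_lt_div_iff₀ (by positivity) (by positivity)]
          nlinarith [mul_pos (mul_pos hn0 (by linarith : (0:ℝ) < n - 1)) (sub_pos.2 h)]

lemma tendsto_gap (hn : n ≠ 0) : Tendsto (gap n q) atTop (𝓝 (1 / 2 - 1 / n)) := by
  have h : Tendsto (fun κ : ℝ => κ * (1 / (2 * (κ + 2)))) atTop (𝓝 (1 / 2)) :=
    (tendsto_affine_div_affine_atTop 1 0 2 4 two_ne_zero).congr fun κ => by ring
  have h' := ((tendsto_tau hn).const_mul 2).const_sub 1 |>.mul h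
  rw [show (1 - 2 * (1 / n)) * (1 / 2) = 1 / 2 - 1 / n by ring] at h'
  refine h'.congr' ?_
  filter_upwards [eventually_ge_atTop q] with κ hκ
  rw [gap, max_eq_right (by linarith), mul_assoc]

lemma min_gap_sub_half (hn : 2 < n) (hκ : 2 / (n - 2) < κ) :
    min (gap n q κ - 1 / 2) 0 = gap n q κ - 1 / 2 :=
  min_eq_left (sub_nonpos.2 (gap_lt_half (by linarith) (pos_of_two_div_lt hn hκ)).le)

lemma ofKappa_strictAntiOn (hn : 2 < n) (hq : -1 < q) :
    StrictAntiOn (ofKappa n q) (Ioi (2 / (n - 2))) := by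
  intro κ₁ hκ₁ κ₂ hκ₂ h
  have hκ₁0 := pos_of_two_div_lt hn hκ₁
  have hn0 : 0 < n := by linarith
  have hmax : max (3 * (q + 1) / (q + κ₂ + 1)) ((2 * κ₂ + 3) / (κ₂ + 1)) <
      max (3 * (q + 1) / (q + κ₁ + 1)) ((2 * κ₁ + 3) / (κ₁ + 1)) := by
    apply max_lt_max
    · have : 0 < q + 1 := by linarith
      have : 0 < q + κ₁ + 1 := by linarith
      gcongr
    · rw [div_lt_div_iff₀ (by linarith) (by linarith)]
      nlinarith
  have hfrac : (1 - tau n κ₂) / (1 - tau n κ₂ + (gap n q κ₂ - 1 / 2)) <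
      (1 - tau n κ₁) / (1 - tau n κ₁ + (gap n q κ₁ - 1 / 2)) := by
    have e (κ : ℝ) : 1 - tau n κ + (gap n q κ - 1 / 2) = (1 - tau n κ) - (1 / 2 - gap n q κ) := by
      ring
    rw [e, e]
    have := gap_lt_half (q := q) hn0 (hκ₁0.trans h)
    have := gap_pos (q := q) hn hκ₁
    have := gap_strictMonoOn (q := q) hn hκ₁ hκ₂ h
    have := tau_lt_half hn hκ₁
    have := tau_strictAntiOn hn0 hκ₁0 (hκ₁0.trans h) h
    exact div_sub_lt_div_sub (by linarith) (by linarith) (by linarith) (by linarith)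
  have hlin : n * κ₁ / (q + κ₁ + 1) < n * κ₂ / (q + κ₂ + 1) := by
    rw [div_lt_div_iff₀ (by linarith) (by linarith)]
    nlinarith [mul_pos (mul_pos hn0 (by linarith : 0 < q + 1)) (sub_pos.2 h)]
  simp only [ofKappa, min_gap_sub_half hn hκ₁, min_gap_sub_half hn hκ₂]
  linarith

lemma tendsto_ofKappa (hn : 2 < n) :
    Tendsto (ofKappa n q) atTop (𝓝 (1 + (n - 1) / (n - 2) - n)) := by
  have hn0 : n ≠ 0 := by linarith
  have hA₁ : Tendsto (fun κ : ℝ => 3 * (q + 1) / (q + κ + 1)) atTop (𝓝 0) := by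
    simpa using (tendsto_affine_div_affine_atTop 0 (3 * (q + 1)) 1 (q + 1) one_ne_zero).congr
      fun κ => by ring
  have hA₂ : Tendsto (fun κ : ℝ => (2 * κ + 3) / (κ + 1)) atTop (𝓝 2) := by
    simpa using tendsto_affine_div_affine_atTop 2 3 1 1 one_ne_zero
  have hC : Tendsto (fun κ : ℝ => n * κ / (q + κ + 1)) atTop (𝓝 n) := by
    simpa using (tendsto_affine_div_affine_atTop n 0 1 (q + 1) one_ne_zero).congr fun κ => by ring
  have hτ := (tendsto_tau hn0).const_sub 1
  have hmin := ((tendsto_gap (q := q) hn0).sub_const (1 / 2)).min (tendsto_const_nhds (x := 0))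
  have hlim : min (1 / 2 - 1 / n - 1 / 2) 0 = -(1 / n) := by
    rw [min_eq_left (by linarith [show 0 < 1 / n by positivity])]
    ring
  rw [hlim] at hmin
  have hden : 1 - 1 / n + -(1 / n) = (n - 2) / n := by
    field_simp
    ring
  have hB := hτ.div (hτ.add hmin) (by rw [hden]; exact div_ne_zero (by linarith) hn0)
  convert ((hA₁.max hA₂).add hB |>.sub hC).sub_const 1 using 1
  · rfl
  · rw [max_eq_right zero_le_two, hden]
    congr 1
    field_simp
    ring

lemma two_div_sub_two_lt_of_sqrt_lt (hn : 3 < n) {c : ℝ}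
    (hc : √(3 * (n - 1) / (n * (n - 3))) < c) : 2 / (n - 2) < n * c ^ 2 / (n - 1) := by
  have hc2 := (Real.sqrt_lt' ((Real.sqrt_nonneg _).trans_lt hc)).1 hc
  rw [div_lt_iff₀ (by nlinarith)] at hc2
  rw [div_lt_div_iff₀ (by linarith) (by linarith)]
  nlinarith [sq_nonneg c]

end Hbar

theorem stmt5_general (m : ℕ) (hm : 4 ≤ m) (ρ : ℝ) :
    StrictAntiOn (Hbar m ρ)
      (Set.Ioi (Real.sqrt (3 * ((m : ℝ) - 1) / ((m : ℝ) * ((m : ℝ) - 3))))) ∧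
    ∃ l : ℝ, l < 0 ∧ Tendsto (Hbar m ρ) atTop (nhds l) := by
  have hm3 : (3 : ℝ) < m := by exact_mod_cast hm
  have hq : -1 < (m : ℝ) * ρ ^ 2 := by nlinarith [sq_nonneg ρ]
  rw [Hbar.eq_ofKappa_comp]
  refine ⟨?_, 1 + (m - 1) / (m - 2) - m, ?_, ?_⟩
  · refine (Hbar.ofKappa_strictAntiOn (by linarith) hq).comp_strictMonoOn ?_
      fun c hc => Hbar.two_div_sub_two_lt_of_sqrt_lt hm3 hc
    intro c hc d _ hcd
    have : 0 ≤ c := (Real.sqrt_nonneg _).trans hc.le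
    have : (0 : ℝ) < m - 1 := by linarith
    dsimp only
    gcongr
  · have : ((m : ℝ) - 1) / (m - 2) < m - 1 := by
      rw [div_lt_iff₀ (by linarith)]
      nlinarith
    linarith
  · exact (Hbar.tendsto_ofKappa (by linarith)).comp
      (((tendsto_pow_atTop two_ne_zero).const_mul_atTop (by linarith)).atTop_div_const
        (by linarith))

/-- Theorem 4(i) of the paper: `c ↦ H̄_m(c, ρ)` is strictly decreasing on
`(√(3(m−1)/(m(m−3))), ∞)` and its limit as `c → ∞` is negative. -/
theorem stmt5 (m : ℕ) (hm : 4 ≤ m) (ρ : ℝ) (hρ : 0 < ρ) :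
    StrictAntiOn (Hbar m ρ)
      (Set.Ioi (Real.sqrt (3 * ((m : ℝ) - 1) / ((m : ℝ) * ((m : ℝ) - 3))))) ∧
    ∃ l : ℝ, l < 0 ∧ Tendsto (Hbar m ρ) atTop (nhds l) :=
  stmt5_general m hm ρ
end

section
/- Let m ≥ 2 be an integer, c > 0 a real, κ = m c²/(m−1), and σ_1, …, σ_{m+1} ≥ 0. Let D = diag(σ_{m+1}, σ_1, …, σ_m) be the (m+1)×(m+1) diagonal matrix and let V be the block matrix V = [ [−m, 1_mᵀ], [1_m, κ I_m − ((κ+1)/m) 1_m 1_mᵀ] ], where 1_m ∈ ℝ^m is the all-ones vector and I_m the m×m identity. Then for every λ ∈ ℝ, det( D V D − λ I_{m+1} ) = f(λ), where f(λ) = −(m σ_{m+1}² + λ) ∏_{i=1}^m (κ σ_i² − λ) + ( κ σ_{m+1}² + ((κ+1)/m) λ ) · Σ_{i=1}^m [ σ_i² ∏_{j≠i, 1≤j≤m} (κ σ_j² − λ) ]. -/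
open MeasureTheory

/-- The matrix `V = [[−m, 1ᵀ], [1, κ I − ((κ+1)/m) 1 1ᵀ]]` with `κ = m c²/(m−1)`,
where index `0` corresponds to the treated cluster. -/
noncomputable def Vmat (m : ℕ) (c : ℝ) : Matrix (Fin (m + 1)) (Fin (m + 1)) ℝ :=
  fun i j =>
    if i = 0 then (if j = 0 then -(m : ℝ) else 1)
    else if j = 0 then 1
    else (if i = j then (m : ℝ) * c ^ 2 / ((m : ℝ) - 1) else 0) -
      ((m : ℝ) * c ^ 2 / ((m : ℝ) - 1) + 1) / (m : ℝ)

/-- `κ = m c² / (m − 1)`. -/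
noncomputable def kappa (m : ℕ) (c : ℝ) : ℝ := (m : ℝ) * c ^ 2 / ((m : ℝ) - 1)

/-- The characteristic polynomial
`f(λ) = −(m σ_{m+1}² + λ) ∏ᵢ (κ σᵢ² − λ) + (κ σ_{m+1}² + ((κ+1)/m) λ) Σᵢ σᵢ² ∏_{j≠i} (κ σⱼ² − λ)`. -/
noncomputable def ffun (m : ℕ) (c : ℝ) (σ : Fin (m + 1) → ℝ) (lam : ℝ) : ℝ :=
  -((m : ℝ) * σ (Fin.last m) ^ 2 + lam) *
      ∏ i : Fin m, (kappa m c * σ i.castSucc ^ 2 - lam) +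
    (kappa m c * σ (Fin.last m) ^ 2 + (kappa m c + 1) / (m : ℝ) * lam) *
      ∑ i : Fin m, σ i.castSucc ^ 2 *
        ∏ j ∈ Finset.univ.erase i, (kappa m c * σ j.castSucc ^ 2 - lam)

/-!
`D V D - λ I` is a diagonal matrix plus a rank-two perturbation whose range is spanned by `e₀`
and `(0, σ₁, …, σ_m)`. While its diagonal entries `-(m σ_{m+1}² + λ)` and `κ σᵢ² - λ` are
all nonzero, the matrix determinant lemma writes the determinant as their product times a `2 × 2`
determinant, which expands to `f(λ)`. Only finitely many `λ` are excluded, so continuity in `λ`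
gives the identity everywhere.
-/

open Matrix Finset

theorem transpose_of_mul_of {ι R : Type*} [NonUnitalNonAssocSemiring R] (x y x' y' : ι → R) :
    (of ![x, y])ᵀ * of ![x', y'] = vecMulVec x x' + vecMulVec y y' := by
  ext i j
  simp [mul_apply, Fin.sum_univ_two, vecMulVec_apply]

theorem of_mul_diagonal_mul_transpose_of {ι R : Type*} [Fintype ι] [DecidableEq ι] [Semiring R]
    (x' y' w x y : ι → R) :
    of ![x', y'] * diagonal w * (of ![x, y])ᵀ =
      !![x' ⬝ᵥ (w * x), x' ⬝ᵥ (w * y); y' ⬝ᵥ (w * x), y' ⬝ᵥ (w * y)] := by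
  ext k l
  fin_cases k <;> fin_cases l <;> simp [mul_apply, dotProduct, vecMul_diagonal, mul_assoc]

theorem det_diagonal_add_vecMulVec_add_vecMulVec {ι K : Type*} [Fintype ι] [DecidableEq ι]
    [Field K] {δ : ι → K} (hδ : ∀ i, δ i ≠ 0) (x x' y y' : ι → K) :
    det (diagonal δ + vecMulVec x x' + vecMulVec y y') =
      (∏ i, δ i) * ((1 + x' ⬝ᵥ (δ⁻¹ * x)) * (1 + y' ⬝ᵥ (δ⁻¹ * y)) -
        x' ⬝ᵥ (δ⁻¹ * y) * y' ⬝ᵥ (δ⁻¹ * x)) := by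
  have hinv : diagonal δ * diagonal δ⁻¹ = 1 := by
    rw [diagonal_mul_diagonal, ← diagonal_one]
    exact congrArg diagonal (funext fun i => mul_inv_cancel₀ (hδ i))
  have hfactor : diagonal δ + vecMulVec x x' + vecMulVec y y' =
      diagonal δ * (1 + diagonal δ⁻¹ * (of ![x, y])ᵀ * of ![x', y']) := by
    rw [Matrix.mul_add, Matrix.mul_one, ← Matrix.mul_assoc, ← Matrix.mul_assoc, hinv,
      Matrix.one_mul, add_assoc, transpose_of_mul_of]
  rw [hfactor, det_mul, det_diagonal, det_one_add_mul_comm, ← Matrix.mul_assoc,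
    of_mul_diagonal_mul_transpose_of, ← det_fin_two_of]
  congr 2
  ext k l
  fin_cases k <;> fin_cases l <;> simp

theorem Finset.sum_mul_prod_erase_eq_sum_div_mul_prod {ι K : Type*} [DecidableEq ι] [Field K]
    (s : Finset ι) (f d : ι → K) (hd : ∀ i ∈ s, d i ≠ 0) :
    ∑ i ∈ s, f i * ∏ j ∈ s.erase i, d j = (∑ i ∈ s, f i / d i) * ∏ j ∈ s, d j := by
  rw [Finset.sum_mul]
  refine Finset.sum_congr rfl fun i hi => ?_
  rw [← mul_prod_erase s d hi]
  field_simp [hd i hi]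

section BorderedDiagonal

variable {R : Type*} [CommRing R] {n : ℕ}

/-- The bordered matrix `[[a, b tᵀ], [b t, diag d - β t tᵀ]]`. -/
def borderedDiagonal (a b β : R) (d t : Fin n → R) : Matrix (Fin (n + 1)) (Fin (n + 1)) R :=
  of (vecCons (vecCons a (b • t)) fun i =>
    vecCons (b * t i) ((diagonal d - β • vecMulVec t t) i))

theorem borderedDiagonal_eq_diagonal_add (a b β : R) (d t : Fin n → R) :
    borderedDiagonal a b β d t =
      diagonal (vecCons a d) + vecMulVec (vecCons 1 0) (b • vecCons 0 t) +
        vecMulVec (vecCons 0 t) (b • vecCons 1 0 - β • vecCons 0 t) := by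
  ext i j
  refine Fin.cases ?_ (fun i => ?_) i <;> refine Fin.cases ?_ (fun j => ?_) j <;>
    simp [borderedDiagonal, vecMulVec_apply, diagonal_apply, vecHead, (Fin.succ_ne_zero _).symm]
  all_goals (try split_ifs) <;> ring

theorem borderedDiagonal_sub_smul_one (a b β : R) (d t : Fin n → R) (l : R) :
    borderedDiagonal a b β d t - l • 1 = borderedDiagonal (a - l) b β (fun i => d i - l) t := by
  ext i j
  refine Fin.cases ?_ (fun i => ?_) i <;> refine Fin.cases ?_ (fun j => ?_) j <;>
    simp [borderedDiagonal, vecMulVec_apply, diagonal_apply, one_apply,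
      (Fin.succ_ne_zero _).symm]
  all_goals (try split_ifs) <;> ring

end BorderedDiagonal

theorem det_borderedDiagonal_of_ne_zero {K : Type*} [Field K] {n : ℕ} {a : K} (b β : K)
    {d : Fin n → K} (t : Fin n → K) (ha : a ≠ 0) (hd : ∀ i, d i ≠ 0) :
    det (borderedDiagonal a b β d t) =
      a * ∏ i, d i - (b ^ 2 + a * β) * ∑ i, t i ^ 2 * ∏ j ∈ univ.erase i, d j := by
  have hδ : ∀ i, vecCons a d i ≠ 0 := Fin.cases ha hd
  rw [borderedDiagonal_eq_diagonal_add, det_diagonal_add_vecMulVec_add_vecMulVec hδ,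
    Finset.sum_mul_prod_erase_eq_sum_div_mul_prod _ _ _ fun i _ => hd i]
  set q := ∑ i, t i ^ 2 / d i
  have hweighted (c : K) : ∑ i, c * t i * ((d i)⁻¹ * t i) = c * q := by
    rw [mul_sum]
    exact sum_congr rfl fun i _ => by ring
  have h₀₀ : (b • vecCons 0 t) ⬝ᵥ ((vecCons a d)⁻¹ * vecCons 1 0) = 0 := by
    simp [dotProduct, Fin.sum_univ_succ]
  have h₀₁ : (b • vecCons 0 t) ⬝ᵥ ((vecCons a d)⁻¹ * vecCons 0 t) = b * q := by
    simp [dotProduct, Fin.sum_univ_succ, hweighted]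
  have h₁₀ :
      (b • vecCons 1 0 - β • vecCons 0 t) ⬝ᵥ ((vecCons a d)⁻¹ * vecCons 1 0) = b / a := by
    simp [dotProduct, Fin.sum_univ_succ, div_eq_mul_inv]
  have h₁₁ :
      (b • vecCons 1 0 - β • vecCons 0 t) ⬝ᵥ ((vecCons a d)⁻¹ * vecCons 0 t) = -(β * q) := by
    simp [dotProduct, Fin.sum_univ_succ, hweighted]
  rw [h₀₀, h₀₁, h₁₀, h₁₁, Fin.prod_univ_succ, cons_val_zero]
  simp only [cons_val_succ]
  field_simp
  ring

theorem det_borderedDiagonal_sub_smul_one {n : ℕ} (a b β : ℝ) (d t : Fin n → ℝ) (l : ℝ) :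
    det (borderedDiagonal a b β d t - l • 1) =
      (a - l) * ∏ i, (d i - l) -
        (b ^ 2 + (a - l) * β) * ∑ i, t i ^ 2 * ∏ j ∈ univ.erase i, (d j - l) := by
  suffices (fun l => det (borderedDiagonal a b β d t - l • 1)) = fun l =>
      (a - l) * ∏ i, (d i - l) -
        (b ^ 2 + (a - l) * β) * ∑ i, t i ^ 2 * ∏ j ∈ univ.erase i, (d j - l) from
    congrFun this l
  have hdense : Dense (insert a (Set.range d))ᶜ :=
    ((Set.finite_range d).insert a).countable.dense_compl ℝ
  refine Continuous.ext_on hdense ?_ (by fun_prop) fun l hl => ?_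
  · exact (continuous_const.sub (continuous_id.smul continuous_const)).matrix_det
  · obtain ⟨hla, hld⟩ : l ≠ a ∧ ∀ i, ¬d i = l := by simpa [not_or] using hl
    rw [borderedDiagonal_sub_smul_one,
      det_borderedDiagonal_of_ne_zero _ _ _ (sub_ne_zero.2 hla.symm) fun i => sub_ne_zero.2 (hld i)]

theorem diagonal_mul_Vmat_mul_diagonal (m : ℕ) (c s : ℝ) (t : Fin m → ℝ) :
    diagonal (Fin.cons s t) * Vmat m c * diagonal (Fin.cons s t) =
      borderedDiagonal (-(m * s ^ 2)) s ((kappa m c + 1) / m) (fun i => kappa m c * t i ^ 2) t := by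
  ext i j
  refine Fin.cases ?_ (fun i => ?_) i <;> refine Fin.cases ?_ (fun j => ?_) j
  · simp [borderedDiagonal, Vmat]
    ring
  · simp [borderedDiagonal, Vmat]
  · simp [borderedDiagonal, Vmat]
    ring
  · by_cases hij : i = j
    · subst hij
      simp [borderedDiagonal, Vmat, kappa, vecMulVec_apply]
      ring
    · simp [borderedDiagonal, Vmat, kappa, vecMulVec_apply, hij]
      ring

theorem stmt10_general (m : ℕ) (hm : 2 ≤ m) (c : ℝ)
    (σ : Fin (m + 1) → ℝ) (lam : ℝ) :
    (Matrix.diagonal (Fin.cons (σ (Fin.last m)) (fun j : Fin m => σ j.castSucc)) *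
        Vmat m c *
        Matrix.diagonal (Fin.cons (σ (Fin.last m)) (fun j : Fin m => σ j.castSucc)) -
        lam • (1 : Matrix (Fin (m + 1)) (Fin (m + 1)) ℝ)).det = ffun m c σ lam := by
  have hm0 : (m : ℝ) ≠ 0 := by exact_mod_cast (by omega : m ≠ 0)
  rw [diagonal_mul_Vmat_mul_diagonal, det_borderedDiagonal_sub_smul_one, ffun]
  field_simp
  ring

/-- Lemma S2 of the paper: `f` is the characteristic polynomial of `D V D`,
where `D = diag(σ_{m+1}, σ_1, …, σ_m)`. -/
theorem stmt10 (m : ℕ) (hm : 2 ≤ m) (c : ℝ) (hc : 0 < c)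
    (σ : Fin (m + 1) → ℝ) (hσ : ∀ j, 0 ≤ σ j) (lam : ℝ) :
    (Matrix.diagonal (Fin.cons (σ (Fin.last m)) (fun j : Fin m => σ j.castSucc)) *
        Vmat m c *
        Matrix.diagonal (Fin.cons (σ (Fin.last m)) (fun j : Fin m => σ j.castSucc)) -
        lam • (1 : Matrix (Fin (m + 1)) (Fin (m + 1)) ℝ)).det = ffun m c σ lam :=
  stmt10_general m hm c σ lam
end

section
/- Let m ≥ 2 be an integer, c > 0 a real, κ = m c²/(m−1), τ = (κ+1)/(m κ), and γ_1, …, γ_m ≥ 0 with sorted values γ_{(1)} ≤ … ≤ γ_{(m)}, and let g be the associated polynomial. Then: (a) for each i ∈ {1, …, m−1}, if γ_{(i)} < γ_{(i+1)} then g has a root in the open interval (κ γ_{(i)}², κ γ_{(i+1)}²), while if γ_{(i)} = γ_{(i+1)} then κ γ_{(i)}² is a root of g; (b) g(0) = 0; (c) g has a negative root θ with θ < −1/τ. -/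
/-- `τ = (κ + 1)/(m κ)`. -/
noncomputable def tauv (m : ℕ) (c : ℝ) : ℝ := (kappa m c + 1) / ((m : ℝ) * kappa m c)

/-- The polynomial
`g(θ) = −(m+θ) ∏ᵢ (κ γᵢ² − θ) + (κ + ((κ+1)/m) θ) Σᵢ γᵢ² ∏_{j≠i} (κ γⱼ² − θ)`. -/
noncomputable def gfun (m : ℕ) (c : ℝ) (γ : Fin m → ℝ) (θ : ℝ) : ℝ :=
  -((m : ℝ) + θ) * ∏ i, (kappa m c * γ i ^ 2 - θ) +
    (kappa m c + (kappa m c + 1) / (m : ℝ) * θ) *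
      ∑ i, γ i ^ 2 * ∏ j ∈ Finset.univ.erase i, (kappa m c * γ j ^ 2 - θ)

/-!
Away from the poles `κ γᵢ²` one has `g(θ) = ∏ᵢ (κ γᵢ² - θ) · F(θ)` with the secular function
`F(θ) = -(m + θ) + (κ + (κ+1) θ / m) Σᵢ γᵢ² / (κ γᵢ² - θ)`, so it suffices to find sign changes
of `F` on pole-free intervals. On `θ ≥ 0` the linear factor is positive, hence between two
consecutive distinct values `F` runs from `-∞` (or from `F(0) = -#{i | γᵢ = 0} < 0` when the
left pole is `0`) up to `+∞`. A repeated value `γⱼ = γₖ` kills every product in `g` at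
`θ = κ γⱼ²`. At `θ = -1/τ` the linear factor vanishes, so `F < 0` there, while
`F(θ) ≥ -(m + θ) - (κ+1)/m · Σᵢ γᵢ²` for `θ < 0` makes `F` positive far to the left.
-/

open Finset Filter Topology

section PartialFractions

variable {ι : Type*} [Fintype ι]

theorem sum_mul_prod_erase_sub_eq [DecidableEq ι] {K : Type*} [Field K] (a b : ι → K) {θ : K}
    (h : ∀ i, a i ≠ θ) :
    ∑ i, b i * ∏ j ∈ univ.erase i, (a j - θ) = (∏ i, (a i - θ)) * ∑ i, b i / (a i - θ) := by
  rw [mul_sum]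
  refine sum_congr rfl fun i _ => ?_
  rw [← mul_prod_erase univ (fun j => a j - θ) (mem_univ i)]
  field_simp [sub_ne_zero.2 (h i)]

theorem sum_div_sub_eq_pole_add (a b : ι → ℝ) (x θ : ℝ) :
    ∑ i, b i / (a i - θ) =
      (∑ i ∈ univ.filter (a · = x), b i) / (x - θ) +
        ∑ i, (if a i = x then 0 else b i) / (a i - θ) := by
  rw [sum_filter, sum_div, ← sum_add_distrib]
  refine sum_congr rfl fun i _ => ?_
  split_ifs with h <;> simp [h]

theorem continuousAt_sum_div_sub (a b : ι → ℝ) {x : ℝ} (h : ∀ i, a i = x → b i = 0) :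
    ContinuousAt (fun θ => ∑ i, b i / (a i - θ)) x := by
  refine tendsto_finsetSum _ fun i _ => ?_
  by_cases hi : a i = x
  · simp only [h i hi, zero_div]
    exact continuousAt_const
  · exact continuousAt_const.div (by fun_prop) (sub_ne_zero.2 hi)

theorem tendsto_sum_div_sub_nhdsLT (a b : ι → ℝ) {x : ℝ} (hb : ∀ i, a i = x → 0 < b i)
    (hx : ∃ i, a i = x) :
    Tendsto (fun θ => ∑ i, b i / (a i - θ)) (𝓝[<] x) atTop := by
  obtain ⟨j, hj⟩ := hx
  have hC : 0 < ∑ i ∈ univ.filter (a · = x), b i :=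
    sum_pos (fun i hi => hb i (mem_filter.1 hi).2) ⟨j, mem_filter.2 ⟨mem_univ j, hj⟩⟩
  have hgap : Tendsto (fun θ => x - θ) (𝓝[<] x) (𝓝[>] 0) := by
    refine tendsto_nhdsWithin_of_tendsto_nhds_of_eventually_within _ ?_ ?_
    · exact tendsto_nhdsWithin_of_tendsto_nhds (by simpa using (continuous_sub_left x).tendsto x)
    · filter_upwards [self_mem_nhdsWithin] with θ (hθ : θ < x) using sub_pos.2 hθ
  simp_rw [sum_div_sub_eq_pole_add a b x, div_eq_mul_inv]
  exact ((tendsto_inv_nhdsGT_zero.comp hgap).const_mul_atTop hC).atTop_add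
    ((continuousAt_sum_div_sub a _ fun i hi => by simp [hi]).tendsto.mono_left nhdsWithin_le_nhds)

theorem tendsto_sum_div_sub_nhdsGT (a b : ι → ℝ) {x : ℝ} (hb : ∀ i, a i = x → 0 < b i)
    (hx : ∃ i, a i = x) :
    Tendsto (fun θ => ∑ i, b i / (a i - θ)) (𝓝[>] x) atBot := by
  obtain ⟨j, hj⟩ := hx
  have hC : 0 < ∑ i ∈ univ.filter (a · = x), b i :=
    sum_pos (fun i hi => hb i (mem_filter.1 hi).2) ⟨j, mem_filter.2 ⟨mem_univ j, hj⟩⟩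
  have hgap : Tendsto (fun θ => x - θ) (𝓝[>] x) (𝓝[<] 0) := by
    refine tendsto_nhdsWithin_of_tendsto_nhds_of_eventually_within _ ?_ ?_
    · exact tendsto_nhdsWithin_of_tendsto_nhds (by simpa using (continuous_sub_left x).tendsto x)
    · filter_upwards [self_mem_nhdsWithin] with θ (hθ : x < θ) using sub_neg.2 hθ
  simp_rw [sum_div_sub_eq_pole_add a b x, div_eq_mul_inv]
  exact ((tendsto_inv_nhdsLT_zero.comp hgap).const_mul_atBot hC).atBot_add
    ((continuousAt_sum_div_sub a _ fun i hi => by simp [hi]).tendsto.mono_left nhdsWithin_le_nhds)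

end PartialFractions

section Secular

variable {m : ℕ} {c : ℝ} {γ : Fin m → ℝ}

theorem kappa_pos (hm : 1 < m) (hc : c ≠ 0) : 0 < kappa m c := by
  have hm' : (1 : ℝ) < m := by exact_mod_cast hm
  have hc2 : 0 < c ^ 2 := by positivity
  exact div_pos (by positivity) (by linarith)

theorem sq_pos_of_kappa_mul_sq_eq (hm : 1 < m) (hc : c ≠ 0) {x s : ℝ} (hs : s ≠ 0)
    (h : kappa m c * x ^ 2 = kappa m c * s ^ 2) : 0 < x ^ 2 := by
  rw [mul_left_cancel₀ (kappa_pos hm hc).ne' h]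
  positivity

theorem gfun_zero : gfun m c γ 0 = 0 := by
  have hsum : kappa m c * ∑ i, γ i ^ 2 * ∏ j ∈ univ.erase i, (kappa m c * γ j ^ 2 - 0) =
      m * ∏ j, (kappa m c * γ j ^ 2 - 0) := by
    rw [mul_sum]
    have hterm : ∀ i ∈ (univ : Finset (Fin m)),
        kappa m c * (γ i ^ 2 * ∏ j ∈ univ.erase i, (kappa m c * γ j ^ 2 - 0)) =
          ∏ j, (kappa m c * γ j ^ 2 - 0) := fun i _ => by
      rw [← mul_prod_erase univ (fun j => kappa m c * γ j ^ 2 - 0) (mem_univ i)]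
      ring
    rw [sum_congr rfl hterm, sum_const, card_univ, Fintype.card_fin, nsmul_eq_mul]
  unfold gfun
  linear_combination hsum

variable (m c γ) in
noncomputable def secular (θ : ℝ) : ℝ :=
  -((m : ℝ) + θ) +
    (kappa m c + (kappa m c + 1) / (m : ℝ) * θ) * ∑ i, γ i ^ 2 / (kappa m c * γ i ^ 2 - θ)

theorem gfun_eq_prod_mul_secular {θ : ℝ} (h : ∀ i, kappa m c * γ i ^ 2 ≠ θ) :
    gfun m c γ θ = (∏ i, (kappa m c * γ i ^ 2 - θ)) * secular m c γ θ := by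
  rw [gfun, secular, sum_mul_prod_erase_sub_eq _ _ h]
  ring

theorem continuousOn_secular {s : Set ℝ} (h : ∀ θ ∈ s, ∀ i, kappa m c * γ i ^ 2 ≠ θ) :
    ContinuousOn (secular m c γ) s := by
  unfold secular
  refine ContinuousOn.add (by fun_prop) (ContinuousOn.mul (by fun_prop)
    (continuousOn_finsetSum _ fun i _ => ?_))
  exact continuousOn_const.div (by fun_prop) fun θ hθ => sub_ne_zero.2 (h θ hθ i)

theorem exists_gfun_eq_zero_of_secular {s : Set ℝ} (hs : IsPreconnected s)
    (h : ∀ θ ∈ s, ∀ i, kappa m c * γ i ^ 2 ≠ θ) {a b : ℝ} (ha : a ∈ s) (hb : b ∈ s)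
    (hneg : secular m c γ a < 0) (hpos : 0 < secular m c γ b) :
    ∃ θ ∈ s, secular m c γ θ = 0 ∧ gfun m c γ θ = 0 := by
  obtain ⟨θ, hθ, hzero⟩ :=
    hs.intermediate_value ha hb (continuousOn_secular h) ⟨hneg.le, hpos.le⟩
  exact ⟨θ, hθ, hzero, by rw [gfun_eq_prod_mul_secular (h θ hθ), hzero, mul_zero]⟩

theorem tendsto_secular_nhdsLT (hm : 1 < m) (hc : c ≠ 0) {s : ℝ} (hs : s ≠ 0)
    (hγs : ∃ j, γ j = s) :
    Tendsto (secular m c γ) (𝓝[<] (kappa m c * s ^ 2)) atTop := by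
  have hκ := kappa_pos hm hc
  obtain ⟨j, hj⟩ := hγs
  have hS := tendsto_sum_div_sub_nhdsLT _ (fun i => γ i ^ 2)
    (fun i => sq_pos_of_kappa_mul_sq_eq hm hc hs) ⟨j, by rw [hj]⟩
  have hcont : ∀ f : ℝ → ℝ, Continuous f →
      Tendsto f (𝓝[<] (kappa m c * s ^ 2)) (𝓝 (f (kappa m c * s ^ 2))) :=
    fun f hf => hf.continuousWithinAt
  exact (hcont _ (by fun_prop)).add_atTop ((hcont _ (by fun_prop)).pos_mul_atTop
    (by positivity) hS)

theorem tendsto_secular_nhdsGT (hm : 1 < m) (hc : c ≠ 0) {s : ℝ} (hs : s ≠ 0)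
    (hγs : ∃ j, γ j = s) :
    Tendsto (secular m c γ) (𝓝[>] (kappa m c * s ^ 2)) atBot := by
  have hκ := kappa_pos hm hc
  obtain ⟨j, hj⟩ := hγs
  have hS := tendsto_sum_div_sub_nhdsGT _ (fun i => γ i ^ 2)
    (fun i => sq_pos_of_kappa_mul_sq_eq hm hc hs) ⟨j, by rw [hj]⟩
  have hcont : ∀ f : ℝ → ℝ, Continuous f →
      Tendsto f (𝓝[>] (kappa m c * s ^ 2)) (𝓝 (f (kappa m c * s ^ 2))) :=
    fun f hf => hf.continuousWithinAt
  exact (hcont _ (by fun_prop)).add_atBot ((hcont _ (by fun_prop)).pos_mul_atBot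
    (by positivity) hS)

theorem continuousAt_secular_zero (hm : 1 < m) (hc : c ≠ 0) :
    ContinuousAt (secular m c γ) 0 := by
  have hS : ContinuousAt (fun θ => ∑ i, γ i ^ 2 / (kappa m c * γ i ^ 2 - θ)) 0 :=
    continuousAt_sum_div_sub _ _ fun i hi =>
      (mul_eq_zero.1 hi).resolve_left (kappa_pos hm hc).ne'
  unfold secular
  fun_prop

theorem secular_zero_neg (h0 : ∃ j, γ j = 0) :
    secular m c γ 0 < 0 := by
  obtain ⟨j, hj⟩ := h0
  -- `κ γᵢ² / (κ γᵢ²)` is at most `1`, and it is `0` for `i = j`.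
  have hsum : kappa m c * ∑ i, γ i ^ 2 / (kappa m c * γ i ^ 2 - 0) < ∑ _i : Fin m, (1 : ℝ) := by
    rw [mul_sum]
    refine sum_lt_sum (fun i _ => ?_) ⟨j, mem_univ j, by simp [hj]⟩
    rw [sub_zero, ← mul_div_assoc]
    exact div_self_le_one _
  simp only [sum_const, card_univ, Fintype.card_fin, nsmul_eq_mul, mul_one] at hsum
  simp only [secular, mul_zero, add_zero]
  linarith

theorem eventually_secular_neg_nhdsGT (hm : 1 < m) (hc : c ≠ 0) {s : ℝ}
    (hγs : ∃ j, γ j = s) :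
    ∀ᶠ θ in 𝓝[>] (kappa m c * s ^ 2), secular m c γ θ < 0 := by
  rcases eq_or_ne s 0 with rfl | hs
  · rw [zero_pow two_ne_zero, mul_zero]
    exact nhdsWithin_le_nhds ((continuousAt_secular_zero hm hc).eventually_lt
      continuousAt_const (secular_zero_neg hγs))
  · exact (tendsto_secular_nhdsGT hm hc hs hγs).eventually_lt_atBot 0

theorem le_secular_of_neg (hm : 1 < m) (hc : c ≠ 0) {θ : ℝ} (hθ : θ < 0) :
    -((m : ℝ) + θ) - (kappa m c + 1) / m * ∑ i, γ i ^ 2 ≤ secular m c γ θ := by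
  have hκ := kappa_pos hm hc
  have hterm : ∀ i, -((kappa m c + 1) / m * γ i ^ 2) ≤
      (kappa m c + (kappa m c + 1) / m * θ) * (γ i ^ 2 / (kappa m c * γ i ^ 2 - θ)) := by
    intro i
    have hd : 0 < kappa m c * γ i ^ 2 - θ := by nlinarith [sq_nonneg (γ i)]
    -- `(κ + (κ+1)/m θ) + (κ+1)/m (κ γᵢ² - θ)` does not depend on `θ`, and is positive.
    have key : (kappa m c + (kappa m c + 1) / m * θ) * (γ i ^ 2 / (kappa m c * γ i ^ 2 - θ)) =
        γ i ^ 2 * (kappa m c + (kappa m c + 1) / m * (kappa m c * γ i ^ 2)) /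
          (kappa m c * γ i ^ 2 - θ) - (kappa m c + 1) / m * γ i ^ 2 := by
      field_simp
      ring
    rw [key]
    have : 0 ≤ γ i ^ 2 * (kappa m c + (kappa m c + 1) / m * (kappa m c * γ i ^ 2)) /
        (kappa m c * γ i ^ 2 - θ) := by positivity
    linarith
  have := sum_le_sum fun i (_ : i ∈ univ) => hterm i
  rw [sum_neg_distrib, ← mul_sum, ← mul_sum] at this
  unfold secular
  linarith

theorem exists_gfun_eq_zero_lt_neg_inv_tauv (hm : 1 < m) (hc : c ≠ 0) :
    ∃ θ < -(tauv m c)⁻¹, gfun m c γ θ = 0 := by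
  have hκ := kappa_pos hm hc
  have hm0 : (0 : ℝ) < m := by exact_mod_cast (zero_lt_one.trans hm)
  set θ₀ := -(tauv m c)⁻¹ with hθ₀
  have hθ₀_eq : θ₀ = -(m * kappa m c / (kappa m c + 1)) := by rw [hθ₀, tauv, inv_div]
  have hθ₀_neg : θ₀ < 0 := by rw [hθ₀_eq]; simp only [neg_lt_zero]; positivity
  have hnopole : ∀ θ ∈ Set.Iic θ₀, ∀ i, kappa m c * γ i ^ 2 ≠ θ := fun θ hθ i =>
    (lt_of_le_of_lt (Set.mem_Iic.1 hθ) (hθ₀_neg.trans_le (by positivity))).ne'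
  -- `θ₀` is the zero of the linear factor `κ + (κ+1)/m θ`.
  have hneg : secular m c γ θ₀ < 0 := by
    have hL : kappa m c + (kappa m c + 1) / m * θ₀ = 0 := by
      rw [hθ₀_eq]; field_simp; ring
    have hmθ : 0 < (m : ℝ) + θ₀ := by
      rw [hθ₀_eq, ← sub_eq_add_neg, sub_pos, div_lt_iff₀ (by positivity)]
      nlinarith
    rw [secular, hL, zero_mul, add_zero]
    linarith
  set C := (kappa m c + 1) / m * ∑ i, γ i ^ 2
  set θ₁ := min θ₀ (-(m : ℝ) - C - 1)
  have hθ₁₀ : θ₁ ≤ θ₀ := min_le_left _ _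
  have hpos : 0 < secular m c γ θ₁ := by
    have hθ₁ : θ₁ ≤ -(m : ℝ) - C - 1 := min_le_right _ _
    have := le_secular_of_neg (γ := γ) hm hc (hθ₁₀.trans_lt hθ₀_neg)
    linarith
  obtain ⟨θ, hθ, hzero, hg⟩ := exists_gfun_eq_zero_of_secular isPreconnected_Iic hnopole
    (Set.mem_Iic.2 le_rfl) hθ₁₀ hneg hpos
  exact ⟨θ, lt_of_le_of_ne hθ (by rintro rfl; linarith), hg⟩

theorem gfun_kappa_mul_sq_eq_zero {j k : Fin m} (hjk : j ≠ k) (h : γ j = γ k) :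
    gfun m c γ (kappa m c * γ j ^ 2) = 0 := by
  have hprod : ∀ s : Finset (Fin m), j ∈ s ∨ k ∈ s →
      ∏ l ∈ s, (kappa m c * γ l ^ 2 - kappa m c * γ j ^ 2) = 0 := by
    rintro s (hj | hk)
    · exact prod_eq_zero hj (sub_self _)
    · exact prod_eq_zero hk (by rw [h, sub_self])
  have herase : ∀ i, j ∈ univ.erase i ∨ k ∈ univ.erase i := fun i => by
    by_cases hij : i = j
    · exact Or.inr (mem_erase.2 ⟨hij ▸ hjk.symm, mem_univ k⟩)
    · exact Or.inl (mem_erase.2 ⟨Ne.symm hij, mem_univ j⟩)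
  simp only [gfun, hprod univ (Or.inl (mem_univ j)), hprod _ (herase _), mul_zero, sum_const_zero,
    add_zero]

theorem exists_gfun_eq_zero_mem_Ioo (hm : 1 < m) (hc : c ≠ 0) (hγ : ∀ j, 0 ≤ γ j) {s t : ℝ}
    (hst : s < t) (hgap : ∀ j, γ j ≤ s ∨ t ≤ γ j) (hs : ∃ j, γ j = s) (ht : ∃ j, γ j = t) :
    ∃ θ ∈ Set.Ioo (kappa m c * s ^ 2) (kappa m c * t ^ 2), gfun m c γ θ = 0 := by
  have hκ := kappa_pos hm hc
  have hs0 : 0 ≤ s := by obtain ⟨j, rfl⟩ := hs; exact hγ j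
  have hsq : ∀ {x y : ℝ}, 0 ≤ x → x ≤ y → kappa m c * x ^ 2 ≤ kappa m c * y ^ 2 :=
    fun hx hxy => mul_le_mul_of_nonneg_left (pow_le_pow_left₀ hx hxy 2) hκ.le
  have hlt : kappa m c * s ^ 2 < kappa m c * t ^ 2 :=
    mul_lt_mul_of_pos_left (pow_lt_pow_left₀ hst hs0 two_ne_zero) hκ
  have hnopole : ∀ θ ∈ Set.Ioo (kappa m c * s ^ 2) (kappa m c * t ^ 2), ∀ i,
      kappa m c * γ i ^ 2 ≠ θ := fun θ hθ i => by
    rcases hgap i with hi | hi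
    · exact ((hsq (hγ i) hi).trans_lt hθ.1).ne
    · exact (hθ.2.trans_le (hsq (hs0.trans hst.le) hi)).ne'
  obtain ⟨a, hneg, ha⟩ :=
    ((eventually_secular_neg_nhdsGT hm hc hs).and (Ioo_mem_nhdsGT hlt)).exists
  obtain ⟨b, hpos, hb⟩ :=
    (((tendsto_secular_nhdsLT hm hc (hs0.trans_lt hst).ne' ht).eventually_gt_atTop 0).and
      (Ioo_mem_nhdsLT hlt)).exists
  obtain ⟨θ, hθ, -, hg⟩ :=
    exists_gfun_eq_zero_of_secular isPreconnected_Ioo hnopole ha hb hneg hpos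
  exact ⟨θ, hθ, hg⟩

end Secular

section Sorted

variable {m : ℕ} (γ : Fin m → ℝ)

theorem monotone_sortedVal : Monotone (sortedVal m γ) := Tuple.monotone_sort γ

theorem exists_sortedVal_eq (j : Fin m) : ∃ r, sortedVal m γ r = γ j :=
  ⟨(Tuple.sort γ).symm j, by simp [sortedVal]⟩

theorem le_sortedVal_or_sortedVal_le {p q : Fin m} (hpq : (p : ℕ) + 1 = q) (j : Fin m) :
    γ j ≤ sortedVal m γ p ∨ sortedVal m γ q ≤ γ j := by
  obtain ⟨r, hr⟩ := exists_sortedVal_eq γ j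
  rw [← hr]
  rcases le_or_gt r p with h | h
  · exact Or.inl (monotone_sortedVal γ h)
  · exact Or.inr (monotone_sortedVal γ (Fin.le_def.2 (by omega)))

end Sorted

/-- Part (a) is stated with the 0-indexed consecutive pairs `(i, i+1)`, `0 ≤ i ≤ m−2`, of
sorted values of `γ`. -/
theorem stmt12 (m : ℕ) (hm : 2 ≤ m) (c : ℝ) (hc : 0 < c)
    (γ : Fin m → ℝ) (hγ : ∀ i, 0 ≤ γ i) :
    (∀ i : ℕ, ∀ hi : i + 1 < m,
      (sortedVal m γ ⟨i, by omega⟩ < sortedVal m γ ⟨i + 1, hi⟩ →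
        ∃ θ : ℝ, θ ∈ Set.Ioo (kappa m c * sortedVal m γ ⟨i, by omega⟩ ^ 2)
            (kappa m c * sortedVal m γ ⟨i + 1, hi⟩ ^ 2) ∧ gfun m c γ θ = 0) ∧
      (sortedVal m γ ⟨i, by omega⟩ = sortedVal m γ ⟨i + 1, hi⟩ →
        gfun m c γ (kappa m c * sortedVal m γ ⟨i, by omega⟩ ^ 2) = 0)) ∧
    gfun m c γ 0 = 0 ∧
    (∃ θ : ℝ, θ < -(tauv m c)⁻¹ ∧ gfun m c γ θ = 0) := by
  refine ⟨fun i hi => ⟨fun hlt => ?_, fun heq => ?_⟩, gfun_zero,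
    exists_gfun_eq_zero_lt_neg_inv_tauv hm hc.ne'⟩
  · exact exists_gfun_eq_zero_mem_Ioo hm hc.ne' hγ hlt (le_sortedVal_or_sortedVal_le γ rfl)
      ⟨_, rfl⟩ ⟨_, rfl⟩
  · have hne : Tuple.sort γ ⟨i, by omega⟩ ≠ Tuple.sort γ ⟨i + 1, hi⟩ := by simp
    exact gfun_kappa_mul_sq_eq_zero hne heq
end

section
/- Let m ≥ 2 be an integer, κ > 0 a real, and τ = (κ+1)/(m κ). For x ≥ 0 and k ∈ {1, …, m}, define the quadratic h(θ; x, k) = −(k−1)x − [ m − x + (m+1−k) τ x ] θ + θ². Then: (a) h(·; x, k) has exactly one positive root, denoted θ(x, k); (b) θ(x, k) ≥ m for all x ≥ 0 and all k ∈ {1, …, m}; (c) θ(0, k) = m for every k ∈ {1, …, m}, and θ(x, 1) = m + x/κ for every x ≥ 0. -/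
/-- The quadratic `h(θ; x, k) = −(k−1)x − [m − x + (m+1−k) τ x] θ + θ²`,
with `τ = (κ+1)/(m κ)`. -/
noncomputable def hquad (m : ℕ) (κ x : ℝ) (k : ℕ) (θ : ℝ) : ℝ :=
  -((k : ℝ) - 1) * x -
    ((m : ℝ) - x + ((m : ℝ) + 1 - (k : ℝ)) * ((κ + 1) / ((m : ℝ) * κ)) * x) * θ + θ ^ 2

/-!
Write `h(θ) = θ² − bθ − c` with `c = (k−1)x ≥ 0`. Then the roots are `(b ± √(b²+4c))/2`, and
the smaller one is `≤ 0`, so the larger one is the only positive root. Evaluating at `θ = m`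
gives `h(m) = −(m+1−k)x/κ ≤ 0`, so `m` lies between the roots, whence `θ(x,k) ≥ m > 0`.
For `x = 0` resp. `k = 1` one checks directly that `m` resp. `m + x/κ` is a positive root.
-/

namespace MonicQuadratic

variable {b c θ : ℝ}

/-- The larger root of `θ² − bθ − c`. -/
noncomputable def posRoot (b c : ℝ) : ℝ := (b + √(b ^ 2 + 4 * c)) / 2

theorem sq_sub_mul_sub_eq (hd : 0 ≤ b ^ 2 + 4 * c) (θ : ℝ) :
    θ ^ 2 - b * θ - c = (θ - posRoot b c) * (θ - (b - √(b ^ 2 + 4 * c)) / 2) := by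
  have hs := Real.sq_sqrt hd
  unfold posRoot
  linear_combination hs / 4

theorem posRoot_isRoot (hd : 0 ≤ b ^ 2 + 4 * c) : posRoot b c ^ 2 - b * posRoot b c - c = 0 := by
  rw [sq_sub_mul_sub_eq hd, sub_self, zero_mul]

theorem le_posRoot (hd : 0 ≤ b ^ 2 + 4 * c) (h : θ ^ 2 - b * θ - c ≤ 0) : θ ≤ posRoot b c := by
  by_contra! hlt
  have hneg : (b - √(b ^ 2 + 4 * c)) / 2 < θ := by
    have := Real.sqrt_nonneg (b ^ 2 + 4 * c)
    unfold posRoot at hlt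
    linarith
  rw [sq_sub_mul_sub_eq hd] at h
  nlinarith [mul_pos (sub_pos.2 hlt) (sub_pos.2 hneg)]

theorem eq_posRoot_of_pos (hc : 0 ≤ c) (hθ : 0 < θ) (h : θ ^ 2 - b * θ - c = 0) :
    θ = posRoot b c := by
  have hd : 0 ≤ b ^ 2 + 4 * c := by positivity
  have hb : b ≤ √(b ^ 2 + 4 * c) :=
    (le_abs_self b).trans (Real.abs_le_sqrt (by linarith))
  rw [sq_sub_mul_sub_eq hd, mul_eq_zero] at h
  rcases h with h | h <;> linarith

end MonicQuadratic

open MonicQuadratic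

noncomputable def hquadLinCoeff (m : ℕ) (κ x : ℝ) (k : ℕ) : ℝ :=
  (m : ℝ) - x + ((m : ℝ) + 1 - (k : ℝ)) * ((κ + 1) / ((m : ℝ) * κ)) * x

theorem hquad_eq (m : ℕ) (κ x : ℝ) (k : ℕ) (θ : ℝ) :
    hquad m κ x k θ = θ ^ 2 - hquadLinCoeff m κ x k * θ - ((k : ℝ) - 1) * x := by
  unfold hquad hquadLinCoeff
  ring

theorem hquad_at_m {m : ℕ} (hm : m ≠ 0) {κ : ℝ} (hκ : κ ≠ 0) (x : ℝ) (k : ℕ) :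
    hquad m κ x k m = -(((m : ℝ) + 1 - k) * x / κ) := by
  unfold hquad
  field_simp
  ring

theorem hquad_at_m_add_div_of_k_eq_one {m : ℕ} (hm : m ≠ 0) {κ : ℝ} (hκ : κ ≠ 0) (x : ℝ) :
    hquad m κ x 1 (m + x / κ) = 0 := by
  unfold hquad
  field_simp
  push_cast
  ring

/-- Lemma S10(a)-(c) of the paper: `h(·; x, k)` has a unique positive root `θ(x,k)`;
it satisfies `θ(x,k) ≥ m`, `θ(0,k) = m`, and `θ(x,1) = m + x/κ`. -/
theorem stmt13 (m : ℕ) (hm : 2 ≤ m) (κ : ℝ) (hκ : 0 < κ)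
    (x : ℝ) (hx : 0 ≤ x) (k : ℕ) (hk1 : 1 ≤ k) (hk2 : k ≤ m) :
    ∃ θp : ℝ, (0 < θp ∧ hquad m κ x k θp = 0) ∧
      (∀ θ : ℝ, 0 < θ → hquad m κ x k θ = 0 → θ = θp) ∧
      (m : ℝ) ≤ θp ∧
      (x = 0 → θp = m) ∧
      (k = 1 → θp = (m : ℝ) + x / κ) := by
  have hm0 : m ≠ 0 := by omega
  have hmpos : (0 : ℝ) < m := by positivity
  have hc : 0 ≤ ((k : ℝ) - 1) * x := mul_nonneg (by simp [hk1]) hx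
  have hd : 0 ≤ hquadLinCoeff m κ x k ^ 2 + 4 * (((k : ℝ) - 1) * x) := by positivity
  have hunique : ∀ θ : ℝ, 0 < θ → hquad m κ x k θ = 0 →
      θ = posRoot (hquadLinCoeff m κ x k) (((k : ℝ) - 1) * x) := fun θ hθ h =>
    eq_posRoot_of_pos hc hθ (hquad_eq m κ x k θ ▸ h)
  have hm_le : (m : ℝ) ≤ posRoot (hquadLinCoeff m κ x k) (((k : ℝ) - 1) * x) := by
    refine le_posRoot hd ?_
    rw [← hquad_eq, hquad_at_m hm0 hκ.ne', neg_nonpos]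
    have : (0 : ℝ) ≤ (m : ℝ) + 1 - k := by
      have : (k : ℝ) ≤ m := by exact_mod_cast hk2
      linarith
    positivity
  refine ⟨_, ⟨hmpos.trans_le hm_le, ?_⟩, hunique, hm_le, fun hx0 => ?_, fun hk => ?_⟩
  · rw [hquad_eq]
    exact posRoot_isRoot hd
  · refine (hunique m hmpos ?_).symm
    simp [hquad_at_m hm0 hκ.ne', hx0]
  · subst hk
    exact (hunique _ (by positivity) (hquad_at_m_add_div_of_k_eq_one hm0 hκ.ne' x)).symm
end

section
/- Let m ≥ 2 be an integer, c > 0 a real, κ = m c²/(m−1), and γ_1, …, γ_m ≥ 0, and let g be the associated polynomial. Suppose θ < 0 satisfies g(θ) = 0. Then |θ| ≤ m + max_{1≤i≤m} γ_i². -/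
/-!
Write `t = -θ > 0` and `aᵢ = κ γᵢ² + t > 0`. Multiplying `g(θ) = 0` by `m` gives
`Σᵢ (t + κ (t − m)) γᵢ² ∏_{j≠i} aⱼ = m (t − m) ∏ⱼ aⱼ`.
If `t > m + γᵢ²` for every `i`, then `(t + κ (t − m)) γᵢ² < (t − m) aᵢ`, since the difference
is `t (t − m − γᵢ²)`; multiplying by `∏_{j≠i} aⱼ` and summing makes the left side strictly
smaller than the right one.
-/

open Finset

theorem Finset.sum_mul_prod_erase_lt_card_mul_prod {ι R : Type*} [DecidableEq ι] [CommRing R]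
    [LinearOrder R] [IsStrictOrderedRing R] {s : Finset ι} (hs : s.Nonempty) {a x : ι → R}
    {b : R} (ha : ∀ i ∈ s, 0 < a i) (hx : ∀ i ∈ s, x i < b * a i) :
    ∑ i ∈ s, x i * ∏ j ∈ s.erase i, a j < #s * b * ∏ j ∈ s, a j :=
  calc ∑ i ∈ s, x i * ∏ j ∈ s.erase i, a j
      < ∑ i ∈ s, b * a i * ∏ j ∈ s.erase i, a j :=
        sum_lt_sum_of_nonempty hs fun i hi =>
          mul_lt_mul_of_pos_right (hx i hi) (prod_pos fun j hj => ha j (mem_of_mem_erase hj))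
    _ = ∑ _i ∈ s, b * ∏ j ∈ s, a j := sum_congr rfl fun i hi => by
        rw [mul_assoc, mul_prod_erase s a hi]
    _ = #s * b * ∏ j ∈ s, a j := by rw [sum_const, nsmul_eq_mul, mul_assoc]

theorem kappa_nonneg {m : ℕ} (hm : 1 ≤ m) (c : ℝ) : 0 ≤ kappa m c := by
  have : (1 : ℝ) ≤ m := by exact_mod_cast hm
  unfold kappa
  exact div_nonneg (by positivity) (by linarith)

theorem mul_gfun {m : ℕ} (hm : m ≠ 0) (c : ℝ) (γ : Fin m → ℝ) (θ : ℝ) :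
    m * gfun m c γ θ =
      m * (-θ - m) * ∏ i, (kappa m c * γ i ^ 2 - θ) -
        ∑ i, (-θ + kappa m c * (-θ - m)) * γ i ^ 2 *
          ∏ j ∈ univ.erase i, (kappa m c * γ j ^ 2 - θ) := by
  have hm' : (m : ℝ) ≠ 0 := by exact_mod_cast hm
  simp only [gfun, mul_assoc, ← mul_sum]
  field_simp
  ring

theorem stmt15_general (m : ℕ) (hm : 2 ≤ m) (c : ℝ)
    (γ : Fin m → ℝ)
    (θ : ℝ) (hθ : θ < 0) (hroot : gfun m c γ θ = 0) :
    |θ| ≤ (m : ℝ) + ⨆ i : Fin m, γ i ^ 2 := by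
  rw [abs_of_neg hθ]
  by_contra! hlarge
  have hγ (i : Fin m) : γ i ^ 2 < -θ - m := by
    linarith [le_ciSup (Set.finite_range fun i => γ i ^ 2).bddAbove i]
  have hfac (i : Fin m) : 0 < kappa m c * γ i ^ 2 - θ := by
    nlinarith [kappa_nonneg (by omega : 1 ≤ m) c, sq_nonneg (γ i)]
  have hterm (i : Fin m) : (-θ + kappa m c * (-θ - m)) * γ i ^ 2 <
      (-θ - m) * (kappa m c * γ i ^ 2 - θ) := by
    nlinarith [mul_pos (neg_pos.2 hθ) (sub_pos.2 (hγ i))]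
  have hlt := sum_mul_prod_erase_lt_card_mul_prod (s := univ) ⟨⟨0, by omega⟩, mem_univ _⟩
    (fun i _ => hfac i) (fun i _ => hterm i)
  have hg := mul_gfun (by omega) c γ θ
  rw [hroot, card_univ, Fintype.card_fin] at *
  linarith

/-- Lemma S11 of the paper: any negative root `θ` of `g` satisfies
`|θ| ≤ m + maxᵢ γᵢ²`. -/
theorem stmt15 (m : ℕ) (hm : 2 ≤ m) (c : ℝ) (hc : 0 < c)
    (γ : Fin m → ℝ) (hγ : ∀ i, 0 ≤ γ i)
    (θ : ℝ) (hθ : θ < 0) (hroot : gfun m c γ θ = 0) :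
    |θ| ≤ (m : ℝ) + ⨆ i : Fin m, γ i ^ 2 :=
  stmt15_general m hm c γ θ hθ hroot
end

section
/- Let b > 0 and let F, G : ℝ → ℝ satisfy: (i) G is continuous and nonnegative on (0, b], G is not identically zero on (0, b], and G is differentiable on (0, b) with continuous nonnegative derivative on (0, b); (ii) F is continuous on (0, b), and there exists x₀ < b such that F(x)(x − x₀) ≥ 0 for all x ∈ (0, b) and F(x) > 0 for all x ∈ (0, b) with x > x₀. If F is Lebesgue integrable on (0, b) and ∫_0^b F(x) dx > 0, then the product F·G is Lebesgue integrable on (0, b) and ∫_0^b F(x) G(x) dx > 0. -/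
/-!
Write `g` for `G x₀` (or `0` when `x₀ ≤ 0`). Since `F` changes sign only at `x₀` and `G` is
monotone, `F (G - g) ≥ 0` pointwise, so `∫ F G ≥ g ∫ F`. This is already positive when
`g > 0`; when `g = 0` the integrand `F G` is nonnegative, and it is strictly positive near `b`,
where both `F` and `G` are.
-/

open MeasureTheory Set

theorem exists_mem_Ioo_pos_of_continuousOn_Ioc {G : ℝ → ℝ} {a b d : ℝ}
    (hG : ContinuousOn G (Ioc a b)) (hd : d ∈ Ioc a b) (hGd : 0 < G d) :
    ∃ c ∈ Ioo a b, 0 < G c := by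
  rcases hd.2.lt_or_eq with hdb | rfl
  · exact ⟨d, ⟨hd.1, hdb⟩, hGd⟩
  have hlim : ContinuousWithinAt G (Ioo a d) d :=
    (hG.continuousWithinAt hd).mono Ioo_subset_Ioc_self
  rw [ContinuousWithinAt, nhdsWithin_Ioo_eq_nhdsLT hd.1] at hlim
  obtain ⟨c, hGc, hc⟩ :=
    ((hlim.eventually (eventually_gt_nhds hGd)).and (Ioo_mem_nhdsLT hd.1)).exists
  exact ⟨c, hc, hGc⟩

theorem mul_sub_nonneg_of_sign_change {F G : ℝ → ℝ} {x x₀ g : ℝ}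
    (hF : 0 ≤ F x * (x - x₀)) (hle : x ≤ x₀ → G x ≤ g) (hge : x₀ ≤ x → g ≤ G x) :
    0 ≤ F x * (G x - g) := by
  rcases lt_trichotomy x x₀ with h | rfl | h
  · have hFx : F x ≤ 0 := nonpos_of_mul_nonneg_left hF (sub_neg.2 h)
    exact mul_nonneg_of_nonpos_of_nonpos hFx (sub_nonpos.2 (hle h.le))
  · simp [le_antisymm (hle le_rfl) (hge le_rfl)]
  · have hFx : 0 ≤ F x := nonneg_of_mul_nonneg_left hF (sub_pos.2 h)
    exact mul_nonneg hFx (sub_nonneg.2 (hge h.le))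

theorem setIntegral_mul_const_le_of_sign_change {μ : Measure ℝ} {F G : ℝ → ℝ} {s : Set ℝ}
    {x₀ g : ℝ} (hs : MeasurableSet s) (hF : IntegrableOn F s μ)
    (hFG : IntegrableOn (fun x => F x * G x) s μ)
    (hsign : ∀ x ∈ s, 0 ≤ F x * (x - x₀)) (hle : ∀ x ∈ s, x ≤ x₀ → G x ≤ g)
    (hge : ∀ x ∈ s, x₀ ≤ x → g ≤ G x) :
    (∫ x in s, F x ∂μ) * g ≤ ∫ x in s, F x * G x ∂μ := by
  rw [← integral_mul_const]
  refine setIntegral_mono_on (hF.mul_const g) hFG hs fun x hx => ?_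
  have := mul_sub_nonneg_of_sign_change (hsign x hx) (hle x hx) (hge x hx)
  rw [mul_sub] at this
  linarith

theorem setIntegral_pos_of_pos_on_subset {X : Type*} [MeasurableSpace X] {μ : Measure X}
    {f : X → ℝ} {s t : Set X} (hs : MeasurableSet s) (hfi : IntegrableOn f s μ)
    (hf : ∀ x ∈ s, 0 ≤ f x) (hts : t ⊆ s) (ht : μ t ≠ 0) (hpos : ∀ x ∈ t, 0 < f x) :
    0 < ∫ x in s, f x ∂μ := by
  rw [setIntegral_pos_iff_support_of_nonneg_ae ((ae_restrict_iff' hs).2 (ae_of_all _ hf)) hfi]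
  exact (pos_iff_ne_zero.2 ht).trans_le
    (measure_mono fun x hx => ⟨(hpos x hx).ne', hts hx⟩)

section MonotoneOnIoc

variable {G : ℝ → ℝ} {a b : ℝ}

theorem integrableOn_mul_of_monotoneOn {μ : Measure ℝ} {F : ℝ → ℝ} (hb : a < b)
    (hF : IntegrableOn F (Ioo a b) μ) (hmono : MonotoneOn G (Ioc a b))
    (hG : ∀ x ∈ Ioc a b, 0 ≤ G x) : IntegrableOn (fun x => F x * G x) (Ioo a b) μ := by
  have hmeas := aemeasurable_restrict_of_monotoneOn (μ := μ) measurableSet_Ioo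
    (hmono.mono Ioo_subset_Ioc_self)
  refine hF.mul_bdd (c := G b) hmeas.aestronglyMeasurable
    ((ae_restrict_iff' measurableSet_Ioo).2 (ae_of_all _ fun x hx => ?_))
  have hxI : x ∈ Ioc a b := Ioo_subset_Ioc_self hx
  rw [Real.norm_of_nonneg (hG x hxI)]
  exact hmono hxI (right_mem_Ioc.2 hb) hx.2.le

theorem exists_nonneg_le_ge_of_monotoneOn {x₀ : ℝ} (hmono : MonotoneOn G (Ioc a b))
    (hG : ∀ x ∈ Ioc a b, 0 ≤ G x) (hx₀ : x₀ ≤ b) :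
    ∃ g, 0 ≤ g ∧ (∀ x ∈ Ioo a b, x ≤ x₀ → G x ≤ g) ∧ ∀ x ∈ Ioo a b, x₀ ≤ x → g ≤ G x := by
  rcases lt_or_ge a x₀ with h | h
  · have hx₀I : x₀ ∈ Ioc a b := ⟨h, hx₀⟩
    exact ⟨G x₀, hG x₀ hx₀I, fun x hx hxx₀ => hmono (Ioo_subset_Ioc_self hx) hx₀I hxx₀,
      fun x hx hxx₀ => hmono hx₀I (Ioo_subset_Ioc_self hx) hxx₀⟩
  · exact ⟨0, le_rfl, fun x hx hxx₀ => absurd (hx.1.trans_le hxx₀) h.not_gt,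
      fun x hx _ => hG x (Ioo_subset_Ioc_self hx)⟩

end MonotoneOnIoc

theorem stmt18_general (b : ℝ) (hb : 0 < b) (F G : ℝ → ℝ)
    (hGcont : ContinuousOn G (Set.Ioc 0 b))
    (hGnonneg : ∀ x ∈ Set.Ioc (0 : ℝ) b, 0 ≤ G x)
    (hGne : ∃ x ∈ Set.Ioc (0 : ℝ) b, G x ≠ 0)
    (hGdiff : ∀ x ∈ Set.Ioo (0 : ℝ) b, DifferentiableAt ℝ G x)
    (hG'nonneg : ∀ x ∈ Set.Ioo (0 : ℝ) b, 0 ≤ deriv G x)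
    (x₀ : ℝ) (hx₀ : x₀ < b)
    (hFsign : ∀ x ∈ Set.Ioo (0 : ℝ) b, 0 ≤ F x * (x - x₀))
    (hFpos : ∀ x ∈ Set.Ioo (0 : ℝ) b, x₀ < x → 0 < F x)
    (hFint : IntegrableOn F (Set.Ioo 0 b))
    (hFintpos : 0 < ∫ x in Set.Ioo (0 : ℝ) b, F x) :
    IntegrableOn (fun x => F x * G x) (Set.Ioo 0 b) ∧
      0 < ∫ x in Set.Ioo (0 : ℝ) b, F x * G x := by
  have hmono : MonotoneOn G (Ioc 0 b) :=
    monotoneOn_of_deriv_nonneg (convex_Ioc 0 b) hGcont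
      (by rw [interior_Ioc]; exact fun x hx => (hGdiff x hx).differentiableWithinAt)
      (by rw [interior_Ioc]; exact hG'nonneg)
  have hFG := integrableOn_mul_of_monotoneOn hb hFint hmono hGnonneg
  refine ⟨hFG, ?_⟩
  obtain ⟨c, hc, hGc⟩ : ∃ c ∈ Ioo 0 b, 0 < G c := by
    obtain ⟨d, hd, hGd⟩ := hGne
    exact exists_mem_Ioo_pos_of_continuousOn_Ioc hGcont hd ((hGnonneg d hd).lt_of_ne' hGd)
  obtain ⟨g, hg, hle, hge⟩ := exists_nonneg_le_ge_of_monotoneOn hmono hGnonneg hx₀.le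
  rcases hg.eq_or_lt with rfl | hgpos
  · have hts : Ioo (max c x₀) b ⊆ Ioo 0 b :=
      Ioo_subset_Ioo (hc.1.le.trans (le_max_left _ _)) le_rfl
    have hFG_nonneg (x : ℝ) (hx : x ∈ Ioo 0 b) : 0 ≤ F x * G x := by
      simpa using mul_sub_nonneg_of_sign_change (hFsign x hx) (hle x hx) (hge x hx)
    refine setIntegral_pos_of_pos_on_subset measurableSet_Ioo hFG hFG_nonneg hts
      (by simpa using ⟨hc.2, hx₀⟩) fun x hx => ?_
    have hx' := hts hx
    exact mul_pos (hFpos x hx' ((le_max_right _ _).trans_lt hx.1))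
      (hGc.trans_le (hmono (Ioo_subset_Ioc_self hc) (Ioo_subset_Ioc_self hx')
        ((le_max_left _ _).trans hx.1.le)))
  · exact (mul_pos hFintpos hgpos).trans_le
      (setIntegral_mul_const_le_of_sign_change measurableSet_Ioo hFint hFG hFsign hle hge)

/-- Lemma S12 of the paper (modified from Bakirov (1989), Lemma 1): positivity of
`∫₀^b F G` given monotone nonnegative `G` and sign-controlled `F` with positive integral. -/
theorem stmt18 (b : ℝ) (hb : 0 < b) (F G : ℝ → ℝ)
    (hGcont : ContinuousOn G (Set.Ioc 0 b))
    (hGnonneg : ∀ x ∈ Set.Ioc (0 : ℝ) b, 0 ≤ G x)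
    (hGne : ∃ x ∈ Set.Ioc (0 : ℝ) b, G x ≠ 0)
    (hGdiff : ∀ x ∈ Set.Ioo (0 : ℝ) b, DifferentiableAt ℝ G x)
    (hG'cont : ContinuousOn (deriv G) (Set.Ioo 0 b))
    (hG'nonneg : ∀ x ∈ Set.Ioo (0 : ℝ) b, 0 ≤ deriv G x)
    (hFcont : ContinuousOn F (Set.Ioo 0 b))
    (x₀ : ℝ) (hx₀ : x₀ < b)
    (hFsign : ∀ x ∈ Set.Ioo (0 : ℝ) b, 0 ≤ F x * (x - x₀))
    (hFpos : ∀ x ∈ Set.Ioo (0 : ℝ) b, x₀ < x → 0 < F x)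
    (hFint : IntegrableOn F (Set.Ioo 0 b))
    (hFintpos : 0 < ∫ x in Set.Ioo (0 : ℝ) b, F x) :
    IntegrableOn (fun x => F x * G x) (Set.Ioo 0 b) ∧
      0 < ∫ x in Set.Ioo (0 : ℝ) b, F x * G x :=
  stmt18_general b hb F G hGcont hGnonneg hGne hGdiff hG'nonneg x₀ hx₀ hFsign hFpos hFint hFintpos
end
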